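/- arXiv:1806.01205 — 2 statements merged into one kernel-verified Lean document; each statement's English description precedes it below -/
import Mathlib

section
/- For any Kleinian group G and any κ with 0 ≤ κ < 1, the limit set Λ_κ(G) of endpoints of geodesic rays with liminf_{t→∞} φ_ξ(t)/t ≤ κ is contained in the horospheric limit set L_h(G). Consequently, the union over 0 ≤ κ < 1 of the sets L_r^{(κ)}(G) is contained in L_h(G). -/
open Metric Filter MeasureTheory Set

noncomputable section

/-- Points of `ℝ^{n+1}`, the ambient space of the Poincaré ball model. -/
abbrev Pt (n : ℕ) := EuclideanSpace ℝ (Fin (n + 1))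

/-- The open unit ball `𝔹^{n+1}`, the Poincaré ball model of hyperbolic space. -/
def Ball (n : ℕ) : Set (Pt n) := Metric.ball 0 1

/-- The boundary sphere `S^n`. -/
def Sph (n : ℕ) : Set (Pt n) := Metric.sphere 0 1

/-- Inverse hyperbolic cosine. -/
def arcosh (x : ℝ) : ℝ := Real.log (x + Real.sqrt (x ^ 2 - 1))

/-- The hyperbolic distance in the Poincaré ball model. -/
def hDist {n : ℕ} (x y : Pt n) : ℝ :=
  arcosh (1 + 2 * dist x y ^ 2 / ((1 - ‖x‖ ^ 2) * (1 - ‖y‖ ^ 2)))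

/-- A Kleinian group: a subgroup of bijections of `ℝ^{n+1}` acting on the ball
as hyperbolic isometries (extending continuously to the closed ball, preserving the
boundary sphere), which is discrete (orbits meet hyperbolic balls in finitely many
group elements). -/
def IsKleinian {n : ℕ} (G : Subgroup (Equiv.Perm (Pt n))) : Prop :=
  (∀ g ∈ G, Set.MapsTo (⇑g) (Ball n) (Ball n)) ∧
  (∀ g ∈ G, Set.MapsTo (⇑g) (Sph n) (Sph n)) ∧
  (∀ g ∈ G, ContinuousOn (⇑g) (Metric.closedBall 0 1)) ∧
  (∀ g ∈ G, ∀ x ∈ Ball n, ∀ y ∈ Ball n, hDist (g x) (g y) = hDist x y) ∧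
  (∀ R : ℝ, {g : G | hDist ((g : Equiv.Perm (Pt n)) 0) 0 ≤ R}.Finite)

/-- The limit set `L(G)`: accumulation points on the sphere of the orbit of the origin. -/
def limitSet {n : ℕ} (G : Subgroup (Equiv.Perm (Pt n))) : Set (Pt n) :=
  {ξ | ξ ∈ Sph n ∧ ∃ u : ℕ → G,
    Filter.Tendsto (fun k => (u k : Equiv.Perm (Pt n)) 0) Filter.atTop (nhds ξ)}

/-- The Busemann function based at `ξ ∈ S^n`, normalized to vanish at the origin;
its sublevel sets are the horoballs tangent at `ξ`. -/
def busemann {n : ℕ} (ξ x : Pt n) : ℝ := Real.log (dist x ξ ^ 2 / (1 - ‖x‖ ^ 2))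

/-- The horospheric limit set `L_h(G)`: every horoball tangent at `ξ` meets the orbit. -/
def horoLimitSet {n : ℕ} (G : Subgroup (Equiv.Perm (Pt n))) : Set (Pt n) :=
  {ξ | ξ ∈ Sph n ∧ ∀ c : ℝ, ∃ g ∈ G, busemann ξ (g 0) < c}

/-- The big horospheric limit set `L_H(G)`: some horoball tangent at `ξ` contains
infinitely many orbit points. -/
def bigHoroLimitSet {n : ℕ} (G : Subgroup (Equiv.Perm (Pt n))) : Set (Pt n) :=
  {ξ | ξ ∈ Sph n ∧ ∃ c : ℝ,
    {g : G | busemann ξ ((g : Equiv.Perm (Pt n)) 0) < c}.Infinite}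

/-- The unit-speed geodesic ray from the origin towards `ξ ∈ S^n`. -/
def geoRay {n : ℕ} (ξ : Pt n) (t : ℝ) : Pt n := Real.tanh (t / 2) • ξ

/-- `φ_ξ(t)`: the distance from the orbit `G·0` to the point at time `t` on the
geodesic ray towards `ξ`. -/
def phi {n : ℕ} (G : Subgroup (Equiv.Perm (Pt n))) (ξ : Pt n) (t : ℝ) : ℝ :=
  ⨅ g : G, hDist ((g : Equiv.Perm (Pt n)) 0) (geoRay ξ t)

/-- The radial limit set `L_r(G)`: infinitely many orbit points within bounded
distance of the geodesic ray towards `ξ`. -/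
def radialLimitSet {n : ℕ} (G : Subgroup (Equiv.Perm (Pt n))) : Set (Pt n) :=
  {ξ | ξ ∈ Sph n ∧ ∃ c : ℝ,
    {g : G | ∃ t : ℝ, 0 ≤ t ∧ hDist ((g : Equiv.Perm (Pt n)) 0) (geoRay ξ t) ≤ c}.Infinite}

/-- `Λ_κ(G)`: endpoints of geodesic rays escaping with rate at most `κ` in the
liminf sense. -/
def LambdaSet {n : ℕ} (G : Subgroup (Equiv.Perm (Pt n))) (κ : ℝ) : Set (Pt n) :=
  {ξ | ξ ∈ Sph n ∧ Filter.liminf (fun t : ℝ => phi G ξ t / t) Filter.atTop ≤ κ}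

/-- The strong sublinear growth limit set `Λ_*(G)`. -/
def LambdaStar {n : ℕ} (G : Subgroup (Equiv.Perm (Pt n))) : Set (Pt n) :=
  {ξ | ξ ∈ Sph n ∧ Filter.Tendsto (fun t : ℝ => phi G ξ t / t) Filter.atTop (nhds 0)}

/-- The shadow `I(w : c, α) = {ξ : |ξ - w/|w|| < c (1-|w|)^α}`. -/
def Ishadow {n : ℕ} (w : Pt n) (c α : ℝ) : Set (Pt n) :=
  {ξ | dist ξ ((‖w‖)⁻¹ • w) < c * (1 - ‖w‖) ^ α}

/-- The κ-shadow limit set `L_r^{(κ)}(G) = ⋃_{c>0} limsup_g I(g·0 : c, 1/(1+κ))`. -/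
def shadowLimitSet {n : ℕ} (G : Subgroup (Equiv.Perm (Pt n))) (κ : ℝ) : Set (Pt n) :=
  {ξ | ξ ∈ Sph n ∧ ∃ c : ℝ, 0 < c ∧
    {g : G | ξ ∈ Ishadow ((g : Equiv.Perm (Pt n)) 0) c (1 / (1 + κ))}.Infinite}

/-- The Myrberg limit set `L_M(G)`: the `G`-images of the geodesic ray towards `ξ`
approximate every geodesic with both endpoints in `L(G)` (expressed via convergence
of the endpoints). -/
def myrbergLimitSet {n : ℕ} (G : Subgroup (Equiv.Perm (Pt n))) : Set (Pt n) :=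
  {ξ | ξ ∈ limitSet G ∧ ∀ x ∈ limitSet G, ∀ y ∈ limitSet G, x ≠ y →
    ∃ u : ℕ → G,
      Filter.Tendsto (fun k => (u k : Equiv.Perm (Pt n)) 0) Filter.atTop (nhds x) ∧
      Filter.Tendsto (fun k => (u k : Equiv.Perm (Pt n)) ξ) Filter.atTop (nhds y)}

/-- Summability of the Poincaré series of `G` with exponent `s` (basepoint the origin). -/
def poincareSummable {n : ℕ} (G : Subgroup (Equiv.Perm (Pt n))) (s : ℝ) : Prop :=
  Summable (fun g : G => Real.exp (-s * hDist ((g : Equiv.Perm (Pt n)) 0) 0))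

/-- The critical exponent `δ(G)`. -/
def critExp {n : ℕ} (G : Subgroup (Equiv.Perm (Pt n))) : ℝ :=
  sInf {s : ℝ | 0 < s ∧ poincareSummable G s}

/-- `G` is of divergence type: the Poincaré series diverges at the critical exponent. -/
def IsDivergenceType {n : ℕ} (G : Subgroup (Equiv.Perm (Pt n))) : Prop :=
  ¬ poincareSummable G (critExp G)

/-- The conformal derivative `|g'(ξ)|` of a Möbius transformation of the ball at a
boundary point, given by the Poisson-kernel formula. -/
def confDeriv {n : ℕ} (g : Equiv.Perm (Pt n)) (ξ : Pt n) : ℝ :=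
  (1 - ‖g.symm 0‖ ^ 2) / dist (g.symm 0) ξ ^ 2

/-- A `G`-invariant conformal measure of dimension `s` on the sphere:
`μ(g A) = ∫_A |g'|^s dμ` for all `g ∈ G`. -/
def IsConformalMeasure {n : ℕ} (G : Subgroup (Equiv.Perm (Pt n))) (s : ℝ)
    (μ : Measure (Pt n)) : Prop :=
  IsFiniteMeasure μ ∧ μ ((Sph n)ᶜ) = 0 ∧
  ∀ g ∈ G, ∀ A : Set (Pt n), MeasurableSet A →
    μ (⇑g '' A) = ENNReal.ofReal (∫ ξ in A, confDeriv g ξ ^ s ∂μ)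

/-- `G` is non-elementary: the limit set contains more than two points. -/
def IsNonelementary {n : ℕ} (G : Subgroup (Equiv.Perm (Pt n))) : Prop :=
  ∃ x ∈ limitSet G, ∃ y ∈ limitSet G, ∃ z ∈ limitSet G, x ≠ y ∧ x ≠ z ∧ y ≠ z

/-- `N` is a normal subgroup of `G`. -/
def IsNormalIn {n : ℕ} (N G : Subgroup (Equiv.Perm (Pt n))) : Prop :=
  N ≤ G ∧ ∀ g ∈ G, ∀ h ∈ N, g * h * g⁻¹ ∈ N


section Aux

open Real RealInnerProductSpace

lemma arcosh_nonneg' {x : ℝ} (hx : 1 ≤ x) : 0 ≤ _root_.arcosh x := by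
  apply Real.log_nonneg
  nlinarith [Real.sqrt_nonneg (x ^ 2 - 1)]

lemma exp_arcosh {x : ℝ} (hx : 1 ≤ x) : Real.exp (_root_.arcosh x) = x + Real.sqrt (x ^ 2 - 1) := by
  apply Real.exp_log
  nlinarith [Real.sqrt_nonneg (x ^ 2 - 1)]

lemma arcosh_le_arcosh {x y : ℝ} (hx : 1 ≤ x) (hxy : x ≤ y) : _root_.arcosh x ≤ _root_.arcosh y := by
  apply Real.log_le_log (by nlinarith [Real.sqrt_nonneg (x ^ 2 - 1)])
  have : Real.sqrt (x ^ 2 - 1) ≤ Real.sqrt (y ^ 2 - 1) := by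
    apply Real.sqrt_le_sqrt; nlinarith
  linarith

lemma abs_tanh_lt_one (t : ℝ) : |Real.tanh t| < 1 := by
  have hc : 0 < Real.cosh t := Real.cosh_pos t
  have h1 : Real.cosh t - Real.sinh t = Real.exp (-t) := Real.cosh_sub_sinh t
  have h2 : Real.cosh t + Real.sinh t = Real.exp t := Real.cosh_add_sinh t
  have e1 := Real.exp_pos (-t)
  have e2 := Real.exp_pos t
  rw [Real.tanh_eq_sinh_div_cosh, abs_div, abs_of_pos hc, div_lt_one hc, abs_lt]
  constructor <;> linarith

lemma key_ineq {E : Type*} [NormedAddCommGroup E] [InnerProductSpace ℝ E]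
    (x y ξ : E) (hξ : ‖ξ‖ = 1) (hx : x ≠ ξ) (hy : y ≠ ξ) :
    ((1 - ‖y‖ ^ 2) / ‖y - ξ‖ ^ 2 - (1 - ‖x‖ ^ 2) / ‖x - ξ‖ ^ 2) ^ 2
      ≤ 4 * ‖x - y‖ ^ 2 / (‖x - ξ‖ ^ 2 * ‖y - ξ‖ ^ 2) := by
  set p : ℝ := ‖x - ξ‖ ^ 2 with hp
  set q : ℝ := ‖y - ξ‖ ^ 2 with hq
  have hp0 : 0 < p := by rw [hp]; exact pow_pos (norm_sub_pos_iff.mpr hx) 2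
  have hq0 : 0 < q := by rw [hq]; exact pow_pos (norm_sub_pos_iff.mpr hy) 2
  set Z : E := (2 / p) • (x - ξ) - (2 / q) • (y - ξ) with hZ
  have hxi : ⟪x - ξ, ξ⟫ = ⟪x, ξ⟫ - 1 := by
    rw [inner_sub_left, real_inner_self_eq_norm_sq, hξ]; ring
  have hyi : ⟪y - ξ, ξ⟫ = ⟪y, ξ⟫ - 1 := by
    rw [inner_sub_left, real_inner_self_eq_norm_sq, hξ]; ring
  have hpe : p = ‖x‖ ^ 2 - 2 * ⟪x, ξ⟫ + 1 := by rw [hp, norm_sub_sq_real, hξ]; ring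
  have hqe : q = ‖y‖ ^ 2 - 2 * ⟪y, ξ⟫ + 1 := by rw [hq, norm_sub_sq_real, hξ]; ring
  have hD : ⟪x, ξ⟫ = (‖x‖ ^ 2 + 1 - p) / 2 := by linarith
  have hE : ⟪y, ξ⟫ = (‖y‖ ^ 2 + 1 - q) / 2 := by linarith
  have hZξ : ⟪Z, ξ⟫ = (1 - ‖y‖ ^ 2) / q - (1 - ‖x‖ ^ 2) / p := by
    rw [hZ, inner_sub_left, real_inner_smul_left, real_inner_smul_left, hxi, hyi, hD, hE]
    field_simp
    ring
  have hs : ‖x - y‖ ^ 2 = p + q - 2 * ⟪x - ξ, y - ξ⟫ := by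
    have h1 : x - y = (x - ξ) - (y - ξ) := by abel
    rw [h1, norm_sub_sq_real, hp, hq]; ring
  have hs' : ⟪x - ξ, y - ξ⟫ = (p + q - ‖x - y‖ ^ 2) / 2 := by linarith
  have hZZ : ‖Z‖ ^ 2 = 4 * ‖x - y‖ ^ 2 / (p * q) := by
    obtain ⟨u, hu⟩ : ∃ u, u = x - ξ := ⟨_, rfl⟩
    obtain ⟨v, hv⟩ : ∃ v, v = y - ξ := ⟨_, rfl⟩
    have e1 : ⟪u, u⟫ = p := by rw [hu, real_inner_self_eq_norm_sq]
    have e2 : ⟪v, v⟫ = q := by rw [hv, real_inner_self_eq_norm_sq]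
    have e3 : ⟪u, v⟫ = (p + q - ‖x - y‖ ^ 2) / 2 := by rw [hu, hv]; exact hs'
    have e4 : ⟪v, u⟫ = (p + q - ‖x - y‖ ^ 2) / 2 := by rw [real_inner_comm]; exact e3
    have hZuv : Z = (2 / p) • u - (2 / q) • v := by rw [hZ, hu, hv]
    rw [← real_inner_self_eq_norm_sq, hZuv]
    simp only [inner_sub_left, inner_sub_right, real_inner_smul_left, real_inner_smul_right,
      e1, e2, e3, e4]
    field_simp
    ring
  have hcs : ⟪Z, ξ⟫ ^ 2 ≤ ‖Z‖ ^ 2 := by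
    have h1 := abs_real_inner_le_norm Z ξ
    rw [hξ, mul_one] at h1
    calc ⟪Z, ξ⟫ ^ 2 = |⟪Z, ξ⟫| ^ 2 := (sq_abs _).symm
    _ ≤ ‖Z‖ ^ 2 := pow_le_pow_left₀ (abs_nonneg _) h1 2
  rw [hZξ, hZZ] at hcs
  exact hcs

variable {n : ℕ}

lemma mem_ball_norm {x : Pt n} (h : x ∈ Ball n) : ‖x‖ < 1 := mem_ball_zero_iff.mp h

lemma mem_sph_norm {ξ : Pt n} (h : ξ ∈ Sph n) : ‖ξ‖ = 1 := mem_sphere_zero_iff_norm.mp h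

lemma ball_sq_pos {x : Pt n} (h : x ∈ Ball n) : 0 < 1 - ‖x‖ ^ 2 := by
  have h1 := mem_ball_norm h
  nlinarith [norm_nonneg x]

lemma ne_of_ball_sph {x ξ : Pt n} (hx : x ∈ Ball n) (hξ : ξ ∈ Sph n) : x ≠ ξ := by
  intro h
  have h1 := mem_ball_norm hx
  rw [h, mem_sph_norm hξ] at h1
  exact lt_irrefl 1 h1

lemma hDist_arg_ge_one {x y : Pt n} (hx : x ∈ Ball n) (hy : y ∈ Ball n) :
    1 ≤ 1 + 2 * dist x y ^ 2 / ((1 - ‖x‖ ^ 2) * (1 - ‖y‖ ^ 2)) := by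
  have h1 := ball_sq_pos hx
  have h2 := ball_sq_pos hy
  have : 0 ≤ 2 * dist x y ^ 2 / ((1 - ‖x‖ ^ 2) * (1 - ‖y‖ ^ 2)) := by positivity
  linarith

lemma hDist_nonneg' {x y : Pt n} (hx : x ∈ Ball n) (hy : y ∈ Ball n) : 0 ≤ hDist x y :=
  arcosh_nonneg' (hDist_arg_ge_one hx hy)

lemma zero_mem_ball : (0 : Pt n) ∈ Ball n := by
  simp [Ball, Metric.mem_ball]

lemma aux_arith {A B p q d2 u s : ℝ} (hA : 0 < A) (hB : 0 < B) (hp0 : 0 < p) (hq0 : 0 < q)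
    (hd2 : 0 ≤ d2) (hu : u = 1 + 2 * d2 / (A * B)) (hs0 : 0 ≤ s) (hs2 : s ^ 2 = u ^ 2 - 1)
    (hkey : (B / q - A / p) ^ 2 ≤ 4 * d2 / (p * q)) : p / A ≤ q / B * (u + s) := by
  have hu1 : 1 ≤ u := by
    rw [hu]
    have : 0 ≤ 2 * d2 / (A * B) := by positivity
    linarith
  have hab : (A / p) ^ 2 + (B / q) ^ 2 ≤ 2 * (A / p) * (B / q) * u := by
    have hfrac : 4 * d2 / (p * q) = 2 * (A / p) * (B / q) * (u - 1) := by
      rw [hu]; field_simp; ring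
    nlinarith [hkey, hfrac]
  obtain ⟨a, hadef⟩ : ∃ a, a = A / p := ⟨_, rfl⟩
  obtain ⟨b, hbdef⟩ : ∃ b, b = B / q := ⟨_, rfl⟩
  have ha0 : 0 < a := hadef ▸ div_pos hA hp0
  have hb0 : 0 < b := hbdef ▸ div_pos hB hq0
  rw [← hadef, ← hbdef] at hab
  have hbau : b ≤ a * (u + s) := by
    by_contra hcon
    push_neg at hcon
    have h3 : a * s < b - a * u := by nlinarith
    have h4 : (0:ℝ) ≤ a * s := mul_nonneg ha0.le hs0
    have h5 : (a * s) ^ 2 < (b - a * u) ^ 2 := by nlinarith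
    nlinarith [hs2]
  rw [hadef, hbdef] at hbau
  rw [div_mul_eq_mul_div, div_le_div_iff₀ hA hB]
  rw [div_mul_eq_mul_div, div_le_div_iff₀ hq0 hp0] at hbau
  nlinarith [hbau]

/-- The Busemann function is 1-Lipschitz for the hyperbolic distance. -/
lemma busemann_lipschitz {x y ξ : Pt n} (hx : x ∈ Ball n) (hy : y ∈ Ball n) (hξ : ξ ∈ Sph n) :
    busemann ξ x ≤ busemann ξ y + hDist x y := by
  have hξ1 : ‖ξ‖ = 1 := mem_sph_norm hξ
  have hxne : x ≠ ξ := ne_of_ball_sph hx hξ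
  have hyne : y ≠ ξ := ne_of_ball_sph hy hξ
  have hA : 0 < 1 - ‖x‖ ^ 2 := ball_sq_pos hx
  have hB : 0 < 1 - ‖y‖ ^ 2 := ball_sq_pos hy
  have hp0 : 0 < dist x ξ ^ 2 := pow_pos (dist_pos.mpr hxne) 2
  have hq0 : 0 < dist y ξ ^ 2 := pow_pos (dist_pos.mpr hyne) 2
  obtain ⟨u, hudef⟩ : ∃ u, u = 1 + 2 * dist x y ^ 2 / ((1 - ‖x‖ ^ 2) * (1 - ‖y‖ ^ 2)) := ⟨_, rfl⟩
  have hu1 : 1 ≤ u := hudef ▸ hDist_arg_ge_one hx hy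
  have hkey : ((1 - ‖y‖ ^ 2) / dist y ξ ^ 2 - (1 - ‖x‖ ^ 2) / dist x ξ ^ 2) ^ 2
      ≤ 4 * dist x y ^ 2 / (dist x ξ ^ 2 * dist y ξ ^ 2) := by
    have h := key_ineq x y ξ hξ1 hxne hyne
    rw [← dist_eq_norm x ξ, ← dist_eq_norm y ξ, ← dist_eq_norm x y] at h
    exact h
  have hmain : dist x ξ ^ 2 / (1 - ‖x‖ ^ 2)
      ≤ dist y ξ ^ 2 / (1 - ‖y‖ ^ 2) * (u + Real.sqrt (u ^ 2 - 1)) :=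
    aux_arith hA hB hp0 hq0 (sq_nonneg _) hudef (Real.sqrt_nonneg _)
      (Real.sq_sqrt (by nlinarith)) hkey
  have hlhs0 : 0 < dist x ξ ^ 2 / (1 - ‖x‖ ^ 2) := div_pos hp0 hA
  have hrhs : busemann ξ y + hDist x y
      = Real.log (dist y ξ ^ 2 / (1 - ‖y‖ ^ 2) * (u + Real.sqrt (u ^ 2 - 1))) := by
    rw [busemann, hDist, ← hudef,
      Real.log_mul (by positivity) (by positivity), _root_.arcosh]
  rw [busemann, hrhs]
  exact Real.log_le_log hlhs0 hmain

/-- Busemann function along the geodesic ray. -/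
lemma busemann_geoRay {ξ : Pt n} (hξ : ξ ∈ Sph n) (t : ℝ) :
    busemann ξ (geoRay ξ t) = -t := by
  have hξ1 : ‖ξ‖ = 1 := mem_sph_norm hξ
  set τ : ℝ := Real.tanh (t / 2) with hτdef
  have hτ : |τ| < 1 := _root_.abs_tanh_lt_one _
  have hτ1 : τ < 1 := (abs_lt.mp hτ).2
  have hτ2 : -1 < τ := (abs_lt.mp hτ).1
  have hc : 0 < Real.cosh (t / 2) := Real.cosh_pos _
  have hd : dist (geoRay ξ t) ξ = 1 - τ := by
    rw [geoRay, dist_eq_norm, ← hτdef]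
    have : τ • ξ - ξ = (τ - 1) • ξ := by rw [sub_smul, one_smul]
    rw [this, norm_smul, hξ1, mul_one, Real.norm_eq_abs, abs_of_nonpos (by linarith)]
    ring
  have hn : ‖geoRay ξ t‖ ^ 2 = τ ^ 2 := by
    rw [geoRay, norm_smul, hξ1, mul_one, Real.norm_eq_abs, sq_abs, ← hτdef]
  rw [busemann, hd, hn]
  have h1 : 1 - τ = Real.exp (-(t / 2)) / Real.cosh (t / 2) := by
    rw [hτdef, Real.tanh_eq_sinh_div_cosh, ← Real.cosh_sub_sinh]
    field_simp
  have h2 : 1 + τ = Real.exp (t / 2) / Real.cosh (t / 2) := by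
    rw [hτdef, Real.tanh_eq_sinh_div_cosh, ← Real.cosh_add_sinh]
    field_simp
  have h3 : (1 - τ) ^ 2 / (1 - τ ^ 2) = Real.exp (-t) := by
    have hf : 1 - τ ^ 2 = (1 - τ) * (1 + τ) := by ring
    have hm : (1 - τ) ^ 2 / (1 - τ ^ 2) = (1 - τ) / (1 + τ) := by
      rw [hf, sq, mul_div_mul_comm, div_self (by linarith : (1:ℝ) - τ ≠ 0), one_mul]
    rw [hm, h1, h2, div_div_div_comm, div_self (ne_of_gt hc), div_one, ← Real.exp_sub]
    ring_nf
  rw [h3, Real.log_exp]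


lemma geoRay_mem_ball {ξ : Pt n} (hξ : ξ ∈ Sph n) (t : ℝ) : geoRay ξ t ∈ Ball n := by
  rw [Ball, mem_ball_zero_iff, geoRay, norm_smul, mem_sph_norm hξ, mul_one, Real.norm_eq_abs]
  exact _root_.abs_tanh_lt_one _

lemma hDist_zero_geoRay {ξ : Pt n} (hξ : ξ ∈ Sph n) {t : ℝ} (ht : 0 ≤ t) :
    hDist 0 (geoRay ξ t) = t := by
  have hξ1 := mem_sph_norm hξ
  have hc : 0 < Real.cosh (t / 2) := Real.cosh_pos _
  have hcs : Real.cosh (t / 2) ^ 2 - Real.sinh (t / 2) ^ 2 = 1 := Real.cosh_sq_sub_sinh_sq _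
  have hn : ‖geoRay ξ t‖ ^ 2 = Real.tanh (t / 2) ^ 2 := by
    rw [geoRay, norm_smul, hξ1, mul_one, Real.norm_eq_abs, sq_abs]
  have hdist : dist (0 : Pt n) (geoRay ξ t) ^ 2 = Real.tanh (t / 2) ^ 2 := by
    rw [dist_comm, dist_zero_right]; exact hn
  have harg : 1 + 2 * dist (0 : Pt n) (geoRay ξ t) ^ 2
      / ((1 - ‖(0 : Pt n)‖ ^ 2) * (1 - ‖geoRay ξ t‖ ^ 2)) = Real.cosh t := by
    rw [hdist, hn, norm_zero, Real.tanh_eq_sinh_div_cosh]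
    have hco : Real.cosh t = Real.cosh (t / 2) ^ 2 + Real.sinh (t / 2) ^ 2 := by
      have h := Real.cosh_two_mul (t / 2)
      rw [show 2 * (t / 2) = t by ring] at h
      exact h
    rw [hco]
    have h2 : 1 - (Real.sinh (t / 2) / Real.cosh (t / 2)) ^ 2
        = 1 / Real.cosh (t / 2) ^ 2 := by
      field_simp
      linarith [hcs]
    rw [h2]
    field_simp
    linarith
  have hsinh : 0 ≤ Real.sinh t := by
    rw [← Real.sinh_zero]
    exact Real.sinh_le_sinh.mpr ht
  rw [hDist, harg, _root_.arcosh]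
  have h3 : Real.cosh t ^ 2 - 1 = Real.sinh t ^ 2 := by
    have := Real.cosh_sq_sub_sinh_sq t; linarith
  rw [h3, Real.sqrt_sq hsinh, Real.cosh_add_sinh, Real.log_exp]

lemma orbit_mem_ball {G : Subgroup (Equiv.Perm (Pt n))} (hG : IsKleinian G) (g : G) :
    (g : Equiv.Perm (Pt n)) 0 ∈ Ball n :=
  hG.1 g g.2 zero_mem_ball

lemma phi_nonneg {G : Subgroup (Equiv.Perm (Pt n))} (hG : IsKleinian G) {ξ : Pt n}
    (hξ : ξ ∈ Sph n) (t : ℝ) : 0 ≤ phi G ξ t :=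
  le_ciInf fun g => hDist_nonneg' (orbit_mem_ball hG g) (geoRay_mem_ball hξ t)

lemma phi_le {G : Subgroup (Equiv.Perm (Pt n))} (hG : IsKleinian G) {ξ : Pt n}
    (hξ : ξ ∈ Sph n) {t : ℝ} (ht : 0 ≤ t) : phi G ξ t ≤ t := by
  have hb : BddBelow (Set.range fun g : G => hDist ((g : Equiv.Perm (Pt n)) 0) (geoRay ξ t)) := by
    refine ⟨0, fun v hv => ?_⟩
    obtain ⟨g, rfl⟩ := hv
    exact hDist_nonneg' (orbit_mem_ball hG g) (geoRay_mem_ball hξ t)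
  have h1 : phi G ξ t ≤ hDist (((1 : G) : Equiv.Perm (Pt n)) 0) (geoRay ξ t) := ciInf_le hb 1
  simpa [hDist_zero_geoRay hξ ht] using h1


end Aux

set_option maxHeartbeats 2000000 in
/-- for `0 ≤ κ < 1` the sublinear escape set `Λ_κ(G)` is contained in the
horospheric limit set, and consequently so is the union of the shadow limit sets
`L_r^{(κ)}(G)` over `0 ≤ κ < 1`. -/
theorem lambda_subset_horoLimitSet {n : ℕ} (G : Subgroup (Equiv.Perm (Pt n)))
    (hG : IsKleinian G) :
    (∀ κ : ℝ, 0 ≤ κ → κ < 1 → LambdaSet G κ ⊆ horoLimitSet G) ∧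
    (⋃ κ ∈ Set.Ico (0 : ℝ) 1, shadowLimitSet G κ) ⊆ horoLimitSet G := by
  have hpart1 : ∀ κ : ℝ, 0 ≤ κ → κ < 1 → LambdaSet G κ ⊆ horoLimitSet G := by
    intro κ hκ0 hκ1 ξ hξmem
    obtain ⟨hξS, hlim⟩ := hξmem
    refine ⟨hξS, fun c => ?_⟩
    obtain ⟨κ', hκκ', hκ'1⟩ : ∃ κ', κ < κ' ∧ κ' < 1 := ⟨(1 + κ) / 2, by linarith, by linarith⟩
    have h1κ' : 0 < 1 - κ' := by linarith
    have hbd : IsBoundedUnder (· ≤ ·) atTop (fun t : ℝ => phi G ξ t / t) := by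
      refine ⟨1, ?_⟩
      rw [eventually_map]
      filter_upwards [eventually_ge_atTop (1 : ℝ)] with t ht
      have ht0 : (0:ℝ) < t := lt_of_lt_of_le one_pos ht
      exact (div_le_one ht0).mpr (phi_le hG hξS ht0.le)
    have hcob := hbd.isCoboundedUnder_ge
    have hfreq : ∃ᶠ t in atTop, phi G ξ t / t < κ' :=
      frequently_lt_of_liminf_lt hcob (lt_of_le_of_lt hlim hκκ')
    obtain ⟨t, hfr, hT⟩ :=
      (hfreq.and_eventually (eventually_ge_atTop (max 1 ((1 - c) / (1 - κ'))))).exists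
    have ht1 : (1:ℝ) ≤ t := le_trans (le_max_left _ _) hT
    have ht0 : (0:ℝ) < t := by linarith
    have hphit : phi G ξ t < κ' * t := by
      have h := (div_lt_iff₀ ht0).mp hfr
      linarith
    obtain ⟨g, hg⟩ : ∃ g : G, hDist ((g : Equiv.Perm (Pt n)) 0) (geoRay ξ t) < κ' * t := by
      by_contra hcon
      push_neg at hcon
      exact absurd (le_ciInf hcon : κ' * t ≤ phi G ξ t) (not_le.mpr hphit)
    refine ⟨g, g.2, ?_⟩
    have hlip := busemann_lipschitz (orbit_mem_ball hG g) (geoRay_mem_ball hξS t) hξS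
    rw [busemann_geoRay hξS t] at hlip
    have hTc : 1 - c ≤ (1 - κ') * max 1 ((1 - c) / (1 - κ')) := by
      have h1 := le_max_right 1 ((1 - c) / (1 - κ'))
      have h2 : (1 - κ') * ((1 - c) / (1 - κ')) ≤ (1 - κ') * max 1 ((1 - c) / (1 - κ')) :=
        mul_le_mul_of_nonneg_left h1 h1κ'.le
      rwa [mul_div_cancel₀ _ (ne_of_gt h1κ')] at h2
    have hTt : (1 - κ') * max 1 ((1 - c) / (1 - κ')) ≤ (1 - κ') * t :=
      mul_le_mul_of_nonneg_left hT h1κ'.le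
    have : busemann ξ ((g : Equiv.Perm (Pt n)) 0) ≤ -t + hDist ((g : Equiv.Perm (Pt n)) 0) (geoRay ξ t) := by linarith
    nlinarith [hg, hTt, hTc]
  refine ⟨hpart1, ?_⟩
  intro ξ hξ
  simp only [Set.mem_iUnion, exists_prop] at hξ
  obtain ⟨κ, ⟨hκ0, hκ1⟩, hξS, c, hc0, hSinf⟩ := hξ
  refine ⟨hξS, fun c' => ?_⟩
  have h1κ : (0:ℝ) < 1 + κ := by linarith
  obtain ⟨α, hα⟩ : ∃ a : ℝ, a = 1 / (1 + κ) := ⟨_, rfl⟩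
  have hα1 : α ≤ 1 := by rw [hα, div_le_one h1κ]; linarith
  have hβval : 2 * α - 1 = (1 - κ) / (1 + κ) := by rw [hα]; field_simp; ring
  have hβ : 0 < 2 * α - 1 := by rw [hβval]; exact div_pos (by linarith) h1κ
  obtain ⟨L, hL⟩ : ∃ L : ℝ, L = Real.log ((1 + c) ^ 2) := ⟨_, rfl⟩
  obtain ⟨ε, hε⟩ : ∃ e : ℝ, e = min (1/2 : ℝ) (Real.exp ((c' - L) / (2 * α - 1))) := ⟨_, rfl⟩
  have hε0 : 0 < ε := hε ▸ lt_min (by norm_num) (Real.exp_pos _)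
  have hεhalf : ε ≤ 1/2 := hε ▸ min_le_left _ _
  have hfin := hG.2.2.2.2 (arcosh (1 + 2 / ε))
  obtain ⟨g, hgS, hgne⟩ := (hSinf.diff hfin).nonempty
  have hwb : (g : Equiv.Perm (Pt n)) 0 ∈ Ball n := orbit_mem_ball hG g
  obtain ⟨w, hwdef⟩ : ∃ w : Pt n, w = (g : Equiv.Perm (Pt n)) 0 := ⟨_, rfl⟩
  rw [← hwdef] at hwb
  have hw1 : ‖w‖ < 1 := mem_ball_norm hwb
  have hwsq : 0 < 1 - ‖w‖ ^ 2 := ball_sq_pos hwb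
  have hεw : 1 - ‖w‖ < ε := by
    by_contra hcon
    push_neg at hcon
    apply hgne
    show hDist ((g : Equiv.Perm (Pt n)) 0) 0 ≤ arcosh (1 + 2 / ε)
    rw [← hwdef, hDist, dist_zero_right, norm_zero]
    have hεsq : ε ≤ 1 - ‖w‖ ^ 2 := by nlinarith [norm_nonneg w]
    apply arcosh_le_arcosh
    · have : 0 ≤ 2 * ‖w‖ ^ 2 / ((1 - ‖w‖ ^ 2) * (1 - 0 ^ 2)) := by positivity
      linarith
    · have h8 : 2 * ‖w‖ ^ 2 / ((1 - ‖w‖ ^ 2) * (1 - (0:ℝ) ^ 2)) ≤ 2 / ε := by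
        rw [show (1 - ‖w‖ ^ 2) * (1 - (0:ℝ) ^ 2) = 1 - ‖w‖ ^ 2 by norm_num]
        apply div_le_div₀ (by norm_num) (by nlinarith) hε0 hεsq
      linarith
  have hr0 : 0 < ‖w‖ := by
    have : (1:ℝ)/2 ≥ ε := hεhalf
    linarith
  have h1r0 : 0 < 1 - ‖w‖ := by linarith
  have hshadow : dist ξ ((‖w‖)⁻¹ • w) < c * (1 - ‖w‖) ^ α := by
    rw [hα, hwdef]
    exact hgS
  have hdw : dist w ((‖w‖)⁻¹ • w) = 1 - ‖w‖ := by
    rw [dist_eq_norm]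
    have h9 : w - (‖w‖)⁻¹ • w = (1 - (‖w‖)⁻¹) • w := by
      rw [sub_smul, one_smul]
    have h10 : (1:ℝ) ≤ (‖w‖)⁻¹ := by
      rw [le_inv_comm₀ one_pos hr0]
      simpa using hw1.le
    rw [h9, norm_smul, Real.norm_eq_abs, abs_of_nonpos (by linarith)]
    field_simp
    ring
  have hpow1 : (1 - ‖w‖) ≤ (1 - ‖w‖) ^ α := by
    have h11 := Real.rpow_le_rpow_of_exponent_ge h1r0 (by linarith) hα1
    rwa [Real.rpow_one] at h11
  have hpowpos : 0 < (1 - ‖w‖) ^ α := Real.rpow_pos_of_pos h1r0 _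
  have hd2 : dist w ξ ≤ (1 + c) * (1 - ‖w‖) ^ α := by
    calc dist w ξ ≤ dist w ((‖w‖)⁻¹ • w) + dist ((‖w‖)⁻¹ • w) ξ := dist_triangle _ _ _
    _ = (1 - ‖w‖) + dist ξ ((‖w‖)⁻¹ • w) := by rw [hdw, dist_comm]
    _ ≤ (1 - ‖w‖) + c * (1 - ‖w‖) ^ α := by linarith
    _ ≤ (1 + c) * (1 - ‖w‖) ^ α := by nlinarith
  have hdpos : 0 < dist w ξ := dist_pos.mpr (ne_of_ball_sph hwb hξS)
  have hfr : dist w ξ ^ 2 / (1 - ‖w‖ ^ 2) ≤ (1 + c) ^ 2 * (1 - ‖w‖) ^ (2 * α - 1) := by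
    have e2 : ((1 - ‖w‖) ^ α) ^ 2 = (1 - ‖w‖) ^ (2 * α) := by
      rw [← Real.rpow_natCast ((1 - ‖w‖) ^ α) 2, ← Real.rpow_mul h1r0.le]
      norm_num
      ring_nf
    have e1 : dist w ξ ^ 2 ≤ (1 + c) ^ 2 * (1 - ‖w‖) ^ (2 * α) := by
      rw [← e2]
      nlinarith [hd2, dist_nonneg (x := w) (y := ξ), hpowpos]
    have e3 : (1 - ‖w‖) ≤ 1 - ‖w‖ ^ 2 := by nlinarith [norm_nonneg w]
    have e6 : (1 + c) ^ 2 * (1 - ‖w‖) ^ (2 * α) / (1 - ‖w‖) = (1 + c) ^ 2 * (1 - ‖w‖) ^ (2 * α - 1) := by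
      rw [Real.rpow_sub h1r0, Real.rpow_one, mul_div_assoc]
    calc dist w ξ ^ 2 / (1 - ‖w‖ ^ 2) ≤ dist w ξ ^ 2 / (1 - ‖w‖) := by gcongr
    _ ≤ (1 + c) ^ 2 * (1 - ‖w‖) ^ (2 * α) / (1 - ‖w‖) := by gcongr
    _ = (1 + c) ^ 2 * (1 - ‖w‖) ^ (2 * α - 1) := e6
  have hblog : busemann ξ w ≤ Real.log ((1 + c) ^ 2 * (1 - ‖w‖) ^ (2 * α - 1)) := by
    rw [busemann]
    exact Real.log_le_log (by positivity) hfr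
  have hsplit : Real.log ((1 + c) ^ 2 * (1 - ‖w‖) ^ (2 * α - 1))
      = L + (2 * α - 1) * Real.log (1 - ‖w‖) := by
    rw [Real.log_mul (by positivity) (ne_of_gt (Real.rpow_pos_of_pos h1r0 _)),
      Real.log_rpow h1r0, hL]
  have hlt : Real.log (1 - ‖w‖) < Real.log ε := Real.log_lt_log h1r0 hεw
  have hlogε : Real.log ε ≤ (c' - L) / (2 * α - 1) := by
    calc Real.log ε ≤ Real.log (Real.exp ((c' - L) / (2 * α - 1))) :=
      Real.log_le_log hε0 (hε ▸ min_le_right _ _)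
    _ = (c' - L) / (2 * α - 1) := Real.log_exp _
  refine ⟨(g : Equiv.Perm (Pt n)), g.2, ?_⟩
  have hfin2 : (2 * α - 1) * ((c' - L) / (2 * α - 1)) = c' - L := by
    field_simp
  calc busemann ξ ((g : Equiv.Perm (Pt n)) 0) = busemann ξ w := by rw [hwdef]
  _ ≤ L + (2 * α - 1) * Real.log (1 - ‖w‖) := hsplit ▸ hblog
  _ < L + (2 * α - 1) * Real.log ε := by nlinarith
  _ ≤ c' := by nlinarith [mul_le_mul_of_nonneg_left hlogε hβ.le]
end
end

section
/- Let h be a hyperbolic isometry of B^{n+1} with axis A, and let ξ be a boundary point such that the geodesic ray [o, ξ) starting at o ∈ A is orthogonal to A. Suppose g ∈ Isom(B^{n+1}) is such that the geodesic segment g([h^{-k}(o), h^k(o)]) lies within distance ε of [o, ξ). Then there exists a constant C depending only on ε and h (not on k or g) such that, with x_k = h^k(o), x'_k = h^{-k}(o), either |d(g h^k g^{-1}(x_k), g(o)) − d(o, g(o))| ≤ C and |d(g h^k g^{-1}(x'_k), g(x_k)) − d(o, g(x_k))| ≤ C, or the analogous estimates hold with h^{-k} in place of h^k and x_k, x'_k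 interchanged. -/
open Metric Filter MeasureTheory Set

noncomputable section

/-- A single bijection of `ℝ^{n+1}` acting as a hyperbolic isometry of the ball. -/
def IsHypIsometry {n : ℕ} (g : Equiv.Perm (Pt n)) : Prop :=
  Set.MapsTo (⇑g) (Ball n) (Ball n) ∧ Set.MapsTo (⇑g) (Sph n) (Sph n) ∧
  ∀ x ∈ Ball n, ∀ y ∈ Ball n, hDist (g x) (g y) = hDist x y

namespace ConjAux
open Real RealInnerProductSpace

/-! ### arcosh lemmas -/

lemma sqrt_term_nonneg {x : ℝ} (hx : 1 ≤ x) : 0 ≤ x ^ 2 - 1 := by nlinarith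

lemma arcosh_arg_pos {x : ℝ} (hx : 1 ≤ x) : 0 < x + Real.sqrt (x ^ 2 - 1) := by
  have := Real.sqrt_nonneg (x ^ 2 - 1); linarith

lemma one_le_arcosh_arg {x : ℝ} (hx : 1 ≤ x) : 1 ≤ x + Real.sqrt (x ^ 2 - 1) := by
  have := Real.sqrt_nonneg (x ^ 2 - 1); linarith

lemma arcosh_nonneg {x : ℝ} (hx : 1 ≤ x) : 0 ≤ _root_.arcosh x :=
  Real.log_nonneg (one_le_arcosh_arg hx)

lemma cosh_arcosh {x : ℝ} (hx : 1 ≤ x) : Real.cosh (_root_.arcosh x) = x := by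
  have h1 : 0 < x + Real.sqrt (x ^ 2 - 1) := arcosh_arg_pos hx
  have hs : Real.sqrt (x ^ 2 - 1) ^ 2 = x ^ 2 - 1 := Real.sq_sqrt (sqrt_term_nonneg hx)
  have hinv : (x + Real.sqrt (x ^ 2 - 1))⁻¹ = x - Real.sqrt (x ^ 2 - 1) :=
    inv_eq_of_mul_eq_one_right (by nlinarith)
  unfold _root_.arcosh
  rw [Real.cosh_eq, Real.exp_log h1, ← Real.log_inv, Real.exp_log (by rw [hinv]; nlinarith), hinv]
  ring

lemma arcosh_le_arcosh {a b : ℝ} (ha : 1 ≤ a) (hab : a ≤ b) : _root_.arcosh a ≤ _root_.arcosh b := by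
  apply Real.log_le_log (arcosh_arg_pos ha)
  have : Real.sqrt (a ^ 2 - 1) ≤ Real.sqrt (b ^ 2 - 1) := by
    apply Real.sqrt_le_sqrt; nlinarith
  linarith

lemma arcosh_add {a b : ℝ} (ha : 1 ≤ a) (hb : 1 ≤ b) :
    _root_.arcosh (a * b + Real.sqrt ((a ^ 2 - 1) * (b ^ 2 - 1))) = _root_.arcosh a + _root_.arcosh b := by
  have hsa : Real.sqrt (a ^ 2 - 1) ^ 2 = a ^ 2 - 1 := Real.sq_sqrt (sqrt_term_nonneg ha)
  have hsb : Real.sqrt (b ^ 2 - 1) ^ 2 = b ^ 2 - 1 := Real.sq_sqrt (sqrt_term_nonneg hb)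
  have hsa0 := Real.sqrt_nonneg (a ^ 2 - 1)
  have hsb0 := Real.sqrt_nonneg (b ^ 2 - 1)
  have hS : Real.sqrt ((a ^ 2 - 1) * (b ^ 2 - 1))
      = Real.sqrt (a ^ 2 - 1) * Real.sqrt (b ^ 2 - 1) := Real.sqrt_mul (sqrt_term_nonneg ha) _
  set sa := Real.sqrt (a ^ 2 - 1)
  set sb := Real.sqrt (b ^ 2 - 1)
  have hX1 : 1 ≤ a * b + Real.sqrt ((a ^ 2 - 1) * (b ^ 2 - 1)) := by
    rw [hS]; nlinarith
  unfold _root_.arcosh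
  rw [← Real.log_mul (ne_of_gt (arcosh_arg_pos ha)) (ne_of_gt (arcosh_arg_pos hb))]
  congr 1
  have hsq : (a * b + Real.sqrt ((a ^ 2 - 1) * (b ^ 2 - 1))) ^ 2 - 1 = (a * sb + b * sa) ^ 2 := by
    rw [hS]; nlinarith
  rw [hsq, Real.sqrt_sq (by nlinarith : (0:ℝ) ≤ a * sb + b * sa), hS]
  ring

lemma cosh_mono {a b : ℝ} (ha : 0 ≤ a) (hab : a ≤ b) : Real.cosh a ≤ Real.cosh b := by
  rw [Real.cosh_le_cosh]
  rw [abs_of_nonneg ha, abs_of_nonneg (le_trans ha hab)]; exact hab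


/-! ### The Minkowski form and the hyperboloid embedding -/

variable {n : ℕ}

def qf (U W : ℝ × Pt n) : ℝ := U.1 * W.1 - ⟪U.2, W.2⟫

def Phi (x : Pt n) : ℝ × Pt n :=
  ((1 + ‖x‖ ^ 2) / (1 - ‖x‖ ^ 2), (2 / (1 - ‖x‖ ^ 2)) • x)

lemma qf_symm (U W : ℝ × Pt n) : qf U W = qf W U := by
  simp only [qf, real_inner_comm U.2 W.2, mul_comm]

lemma qf_add_left (U V W : ℝ × Pt n) : qf (U + V) W = qf U W + qf V W := by
  simp only [qf, Prod.fst_add, Prod.snd_add, inner_add_left]; ring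

lemma qf_sub_left (U V W : ℝ × Pt n) : qf (U - V) W = qf U W - qf V W := by
  simp only [qf, Prod.fst_sub, Prod.snd_sub, inner_sub_left]; ring

lemma qf_smul_left (c : ℝ) (U W : ℝ × Pt n) : qf (c • U) W = c * qf U W := by
  simp only [qf, Prod.smul_fst, Prod.smul_snd, real_inner_smul_left, smul_eq_mul]; ring

lemma qf_add_right (U V W : ℝ × Pt n) : qf U (V + W) = qf U V + qf U W := by
  rw [qf_symm, qf_add_left, qf_symm V U, qf_symm W U]

lemma qf_sub_right (U V W : ℝ × Pt n) : qf U (V - W) = qf U V - qf U W := by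
  rw [qf_symm, qf_sub_left, qf_symm V U, qf_symm W U]

lemma qf_smul_right (c : ℝ) (U W : ℝ × Pt n) : qf U (c • W) = c * qf U W := by
  rw [qf_symm, qf_smul_left, qf_symm W U]

lemma qf_self (U : ℝ × Pt n) : qf U U = U.1 ^ 2 - ‖U.2‖ ^ 2 := by
  simp only [qf, real_inner_self_eq_norm_sq]; ring

/-- A future-pointing unit timelike vector. -/
def Fut (Y : ℝ × Pt n) : Prop := qf Y Y = 1 ∧ 0 < Y.1

lemma mem_ball_norm {x : Pt n} : x ∈ Ball n ↔ ‖x‖ < 1 := by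
  simp [Ball, mem_ball_zero_iff]

lemma P_pos {x : Pt n} (hx : x ∈ Ball n) : 0 < 1 - ‖x‖ ^ 2 := by
  have := mem_ball_norm.mp hx
  have h0 := norm_nonneg x
  nlinarith

lemma qf_Phi {x y : Pt n} (hx : x ∈ Ball n) (hy : y ∈ Ball n) :
    qf (Phi x) (Phi y) = 1 + 2 * dist x y ^ 2 / ((1 - ‖x‖ ^ 2) * (1 - ‖y‖ ^ 2)) := by
  have hpx := P_pos hx
  have hpy := P_pos hy
  simp only [qf, Phi, real_inner_smul_left, real_inner_smul_right]
  rw [dist_eq_norm, norm_sub_sq_real]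
  field_simp
  ring

lemma hDist_eq {x y : Pt n} (hx : x ∈ Ball n) (hy : y ∈ Ball n) :
    hDist x y = _root_.arcosh (qf (Phi x) (Phi y)) := by
  rw [qf_Phi hx hy]; rfl

lemma one_le_qf_Phi {x y : Pt n} (hx : x ∈ Ball n) (hy : y ∈ Ball n) :
    1 ≤ qf (Phi x) (Phi y) := by
  rw [qf_Phi hx hy]
  have : 0 ≤ 2 * dist x y ^ 2 / ((1 - ‖x‖ ^ 2) * (1 - ‖y‖ ^ 2)) :=
    div_nonneg (by positivity) (le_of_lt (mul_pos (P_pos hx) (P_pos hy)))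
  linarith

lemma qf_Phi_self {x : Pt n} (hx : x ∈ Ball n) : qf (Phi x) (Phi x) = 1 := by
  rw [qf_Phi hx hx]; simp

lemma Fut_Phi {x : Pt n} (hx : x ∈ Ball n) : Fut (Phi x) :=
  ⟨qf_Phi_self hx, div_pos (by positivity) (P_pos hx)⟩

lemma Fut_norm_lt {Y : ℝ × Pt n} (hY : Fut Y) : ‖Y.2‖ < Y.1 := by
  obtain ⟨h1, h2⟩ := hY
  rw [qf_self] at h1
  have := norm_nonneg Y.2
  nlinarith

/-- The orthogonal complement of a future unit vector is negative semidefinite. -/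
lemma ortho_nonpos {Y W : ℝ × Pt n} (hY : Fut Y) (hW : qf W Y = 0) :
    qf W W ≤ -(‖W.2‖ ^ 2 / Y.1 ^ 2) := by
  obtain ⟨h1, h2⟩ := hY
  rw [qf_self] at h1
  have hWY : W.1 * Y.1 = ⟪W.2, Y.2⟫ := by
    have h := hW
    simp only [qf] at h
    linarith
  have hcs : |⟪W.2, Y.2⟫| ≤ ‖W.2‖ * ‖Y.2‖ := abs_real_inner_le_norm _ _
  have h3 : (W.1 * Y.1) ^ 2 ≤ ‖W.2‖ ^ 2 * ‖Y.2‖ ^ 2 := by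
    rw [hWY]
    nlinarith [abs_nonneg ⟪W.2, Y.2⟫, sq_abs ⟪W.2, Y.2⟫, norm_nonneg W.2, norm_nonneg Y.2]
  have hY1 : 0 < Y.1 ^ 2 := pow_pos h2 2
  have key : (W.1 ^ 2 - ‖W.2‖ ^ 2) * Y.1 ^ 2 ≤ -‖W.2‖ ^ 2 := by nlinarith
  rw [qf_self, ← neg_div, le_div_iff₀ hY1]
  linarith

lemma ortho_eq_zero {Y W : ℝ × Pt n} (hY : Fut Y) (hW : qf W Y = 0)
    (hWW : 0 ≤ qf W W) : W = 0 := by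
  have h := ortho_nonpos hY hW
  have hY1 : 0 < Y.1 ^ 2 := pow_pos hY.2 2
  have hnn : 0 ≤ ‖W.2‖ ^ 2 / Y.1 ^ 2 := div_nonneg (pow_nonneg (norm_nonneg _) 2) (le_of_lt hY1)
  have h2 : ‖W.2‖ ^ 2 / Y.1 ^ 2 = 0 := le_antisymm (by linarith) hnn
  have hW2 : W.2 = 0 := by
    exact norm_eq_zero.mp ((pow_eq_zero_iff two_ne_zero).mp ((div_eq_zero_iff.mp h2).resolve_right hY1.ne'))
  have hW1 : W.1 = 0 := by
    have h := hW
    simp only [qf, hW2, inner_zero_left] at h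
    have := hY.2
    rcases mul_eq_zero.mp (by linarith : W.1 * Y.1 = 0) with h' | h'
    · exact h'
    · linarith
  exact Prod.ext hW1 hW2

/-- Reverse Cauchy-Schwarz. -/
lemma one_le_qf_fut {X Y : ℝ × Pt n} (hX : Fut X) (hY : Fut Y) : 1 ≤ qf X Y := by
  have hcs : ⟪X.2, Y.2⟫ ≤ ‖X.2‖ * ‖Y.2‖ := real_inner_le_norm _ _
  have ht : 0 < qf X Y := by
    have h1 := Fut_norm_lt hX
    have h2 := Fut_norm_lt hY
    have h3 := norm_nonneg X.2
    have h4 := norm_nonneg Y.2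
    simp only [qf]
    nlinarith
  set t := qf X Y with htdef
  have hW : qf (X - t • Y) Y = 0 := by
    rw [qf_sub_left, qf_smul_left, hY.1]; ring
  have h2 := ortho_nonpos hY hW
  have h3 : qf (X - t • Y) (X - t • Y) = 1 - t ^ 2 := by
    rw [qf_sub_left, qf_sub_right, qf_sub_right, qf_smul_left, qf_smul_left,
      qf_smul_right, qf_smul_right, hX.1, hY.1, qf_symm Y X, ← htdef]
    ring
  have hY1 : 0 < Y.1 ^ 2 := pow_pos hY.2 2
  have hnn : 0 ≤ ‖(X - t • Y).2‖ ^ 2 / Y.1 ^ 2 := div_nonneg (pow_nonneg (norm_nonneg _) 2) (le_of_lt hY1)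
  have h4 : 1 - t ^ 2 ≤ 0 := by rw [← h3]; linarith
  nlinarith

/-- Cauchy-Schwarz on the orthogonal complement of a future unit vector. -/
lemma ortho_cs {Y U W : ℝ × Pt n} (hY : Fut Y) (hU : qf U Y = 0) (hW : qf W Y = 0) :
    qf U W ^ 2 ≤ qf U U * qf W W := by
  have hY1 : 0 < Y.1 ^ 2 := pow_pos hY.2 2
  have key : ∀ t : ℝ, qf U U + 2 * t * qf U W + t ^ 2 * qf W W ≤ 0 := by
    intro t
    have horto : qf (U + t • W) Y = 0 := by
      rw [qf_add_left, qf_smul_left, hU, hW]; ring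
    have h := ortho_nonpos hY horto
    have hnn : 0 ≤ ‖(U + t • W).2‖ ^ 2 / Y.1 ^ 2 := div_nonneg (pow_nonneg (norm_nonneg _) 2) (le_of_lt hY1)
    have hexp : qf (U + t • W) (U + t • W)
        = qf U U + 2 * t * qf U W + t ^ 2 * qf W W := by
      rw [qf_add_left, qf_add_right, qf_add_right, qf_smul_left, qf_smul_left,
        qf_smul_right, qf_smul_right, qf_symm W U]
      ring
    rw [hexp] at h
    linarith
  have hWWle : qf W W ≤ 0 := by
    have := ortho_nonpos hY hW
    have hnn : 0 ≤ ‖W.2‖ ^ 2 / Y.1 ^ 2 := div_nonneg (pow_nonneg (norm_nonneg _) 2) (le_of_lt hY1)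
    linarith
  rcases lt_or_eq_of_le hWWle with hlt | heq
  · have hne : qf W W ≠ 0 := ne_of_lt hlt
    have h := key (-(qf U W) / qf W W)
    have e : qf U U + 2 * (-(qf U W) / qf W W) * qf U W + (-(qf U W) / qf W W) ^ 2 * qf W W
        = qf U U - qf U W ^ 2 / qf W W := by
      field_simp
      ring
    rw [e] at h
    have h2 : qf U U ≤ qf U W ^ 2 / qf W W := by linarith
    have h3 := (le_div_iff_of_neg hlt).mp h2
    linarith
  · have hUW : qf U W = 0 := by
      by_contra hc
      have h := key ((1 - qf U U) / (2 * qf U W))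
      have e : qf U U + 2 * ((1 - qf U U) / (2 * qf U W)) * qf U W
          + ((1 - qf U U) / (2 * qf U W)) ^ 2 * qf W W = 1 := by
        rw [heq]
        field_simp
        ring
      rw [e] at h
      linarith
    rw [hUW, heq]
    norm_num

/-- The key Minkowski inequality behind the triangle inequality. -/
lemma qf_triangle {X Y Z : ℝ × Pt n} (hX : Fut X) (hY : Fut Y) (hZ : Fut Z) :
    qf X Z ≤ qf X Y * qf Y Z + Real.sqrt ((qf X Y ^ 2 - 1) * (qf Y Z ^ 2 - 1)) := by
  set a := qf X Y with ha
  set b := qf Z Y with hb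
  have ha1 : 1 ≤ a := one_le_qf_fut hX hY
  have hb1 : 1 ≤ b := one_le_qf_fut hZ hY
  have hXo : qf (X - a • Y) Y = 0 := by rw [qf_sub_left, qf_smul_left, hY.1]; ring
  have hZo : qf (Z - b • Y) Y = 0 := by rw [qf_sub_left, qf_smul_left, hY.1]; ring
  have hXX : qf (X - a • Y) (X - a • Y) = 1 - a ^ 2 := by
    rw [qf_sub_left, qf_sub_right, qf_sub_right, qf_smul_left, qf_smul_left,
      qf_smul_right, qf_smul_right, hX.1, hY.1, qf_symm Y X, ← ha]
    ring
  have hZZ : qf (Z - b • Y) (Z - b • Y) = 1 - b ^ 2 := by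
    rw [qf_sub_left, qf_sub_right, qf_sub_right, qf_smul_left, qf_smul_left,
      qf_smul_right, qf_smul_right, hZ.1, hY.1, qf_symm Y Z, ← hb]
    ring
  have hcs := ortho_cs hY hXo hZo
  rw [hXX, hZZ] at hcs
  have hXZ : qf X Z = qf (X - a • Y) (Z - b • Y) + a * b := by
    rw [qf_sub_left, qf_sub_right, qf_sub_right, qf_smul_left, qf_smul_left,
      qf_smul_right, qf_smul_right, hY.1, qf_symm Y Z]
    ring
  have hqb : qf Y Z = b := by rw [qf_symm]
  rw [hqb, hXZ]
  have hle : qf (X - a • Y) (Z - b • Y) ≤ Real.sqrt ((a ^ 2 - 1) * (b ^ 2 - 1)) := by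
    calc qf (X - a • Y) (Z - b • Y) ≤ |qf (X - a • Y) (Z - b • Y)| := le_abs_self _
    _ = Real.sqrt (qf (X - a • Y) (Z - b • Y) ^ 2) := (Real.sqrt_sq_eq_abs _).symm
    _ ≤ Real.sqrt ((a ^ 2 - 1) * (b ^ 2 - 1)) := by
        apply Real.sqrt_le_sqrt; nlinarith
  linarith

/-- Triangle inequality for the hyperbolic distance. -/
lemma hDist_triangle {x y z : Pt n} (hx : x ∈ Ball n) (hy : y ∈ Ball n) (hz : z ∈ Ball n) :
    hDist x z ≤ hDist x y + hDist y z := by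
  rw [hDist_eq hx hz, hDist_eq hx hy, hDist_eq hy hz,
    ← arcosh_add (one_le_qf_Phi hx hy) (one_le_qf_Phi hy hz)]
  apply arcosh_le_arcosh (one_le_qf_Phi hx hz)
  exact qf_triangle (Fut_Phi hx) (Fut_Phi hy) (Fut_Phi hz)

lemma hDist_symm (x y : Pt n) : hDist x y = hDist y x := by
  simp [hDist, dist_comm, mul_comm]


/-! ### Surjectivity of ball isometries -/

lemma qf_zero_left (W : ℝ × Pt n) : qf 0 W = 0 := by simp [qf]

lemma qf_sum_left {ι : Type*} (s : Finset ι) (f : ι → ℝ × Pt n) (W : ℝ × Pt n) :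
    qf (∑ i ∈ s, f i) W = ∑ i ∈ s, qf (f i) W := by
  classical
  induction s using Finset.induction_on with
  | empty => simp [qf_zero_left]
  | insert _ _ hi ih => rw [Finset.sum_insert hi, Finset.sum_insert hi, qf_add_left, ih]

lemma qf_sum_right {ι : Type*} (s : Finset ι) (f : ι → ℝ × Pt n) (W : ℝ × Pt n) :
    qf W (∑ i ∈ s, f i) = ∑ i ∈ s, qf W (f i) := by
  rw [qf_symm, qf_sum_left]
  exact Finset.sum_congr rfl fun i _ => qf_symm _ _

lemma qf_fst (U : ℝ × Pt n) : qf U (1, (0 : Pt n)) = U.1 := by simp [qf]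

/-- The linear map determined by prescribed images. -/
def Amap (Y0 : ℝ × Pt n) (E : Fin (n + 1) → ℝ × Pt n) : (ℝ × Pt n) →ₗ[ℝ] (ℝ × Pt n) where
  toFun U := U.1 • Y0 + ∑ i, U.2 i • E i
  map_add' U V := by
    simp only [Prod.fst_add, Prod.snd_add, add_smul, PiLp.add_apply]
    rw [Finset.sum_add_distrib]
    abel
  map_smul' c U := by
    simp only [Prod.smul_fst, Prod.smul_snd, smul_eq_mul, PiLp.smul_apply, RingHom.id_apply,
      mul_smul, smul_add, Finset.smul_sum]

lemma Amap_apply (Y0 : ℝ × Pt n) (E : Fin (n + 1) → ℝ × Pt n) (U : ℝ × Pt n) :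
    Amap Y0 E U = U.1 • Y0 + ∑ i, U.2 i • E i := rfl

lemma qf_Amap {Y0 : ℝ × Pt n} {E : Fin (n + 1) → ℝ × Pt n}
    (hY0 : qf Y0 Y0 = 1) (hY0E : ∀ i, qf Y0 (E i) = 0)
    (hEE : ∀ i j, qf (E i) (E j) = if i = j then (-1 : ℝ) else 0)
    (U W : ℝ × Pt n) : qf (Amap Y0 E U) (Amap Y0 E W) = qf U W := by
  rw [Amap_apply, Amap_apply, qf_add_left, qf_add_right, qf_add_right,
    qf_smul_left, qf_smul_left, qf_smul_right, qf_sum_right, qf_sum_left, qf_sum_left]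
  have e1 : ∑ i : Fin (n + 1), qf Y0 (W.2 i • E i) = 0 := by
    apply Finset.sum_eq_zero; intro i _
    rw [qf_smul_right, hY0E i]; ring
  have e2 : ∑ i : Fin (n + 1), qf (U.2 i • E i) (W.1 • Y0) = 0 := by
    apply Finset.sum_eq_zero; intro i _
    rw [qf_smul_left, qf_smul_right, qf_symm, hY0E i]; ring
  have e3 : ∑ i : Fin (n + 1), qf (U.2 i • E i) (∑ j : Fin (n + 1), W.2 j • E j)
      = -⟪U.2, W.2⟫ := by
    have key : ∀ i : Fin (n + 1), qf (U.2 i • E i) (∑ j : Fin (n + 1), W.2 j • E j)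
        = -(U.2 i * W.2 i) := by
      intro i
      rw [qf_smul_left, qf_sum_right]
      have h2 : ∀ j : Fin (n + 1), qf (E i) (W.2 j • E j) = if j = i then -(W.2 j) else 0 := by
        intro j
        rw [qf_smul_right, hEE i j]
        by_cases h : i = j
        · subst h; simp
        · simp [h, Ne.symm h]
      rw [Finset.sum_congr rfl fun j _ => h2 j,
        Finset.sum_ite_eq' Finset.univ i (fun j => -(W.2 j))]
      simp only [Finset.mem_univ, if_true]
      ring
    rw [Finset.sum_congr rfl fun i _ => key i]
    rw [PiLp.inner_apply]
    simp [RCLike.inner_apply, Finset.sum_neg_distrib]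
    exact Finset.sum_congr rfl fun _ _ => mul_comm _ _
  rw [e1, e2, e3, hY0]
  simp only [qf]
  ring

lemma Amap_injective {Y0 : ℝ × Pt n} {E : Fin (n + 1) → ℝ × Pt n}
    (hq : ∀ U W, qf (Amap Y0 E U) (Amap Y0 E W) = qf U W) :
    Function.Injective (Amap Y0 E) := by
  intro a b hab
  have h0 : Amap Y0 E (a - b) = 0 := by rw [map_sub, hab, sub_self]
  have hz : ∀ W, qf (a - b) W = 0 := by
    intro W
    have := hq (a - b) W
    rw [h0, qf_zero_left] at this
    exact this.symm
  have h1 : (a - b).1 = 0 := by rw [← qf_fst (a - b)]; exact hz _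
  have h2 : (a - b).2 = 0 := by
    have := hz (0, (a - b).2)
    simp only [qf, real_inner_self_eq_norm_sq] at this
    have hn : ‖(a - b).2‖ ^ 2 = 0 := by nlinarith
    simpa using hn
  have : a - b = 0 := Prod.ext h1 h2
  exact sub_eq_zero.mp this
  
lemma Phi_zero : Phi (0 : Pt n) = (1, (0 : Pt n)) := by
  simp [Phi]

lemma Phi_recon {W : ℝ × Pt n} (hWW : qf W W = 1) (hW1 : 0 < W.1) :
    ∃ w ∈ Ball n, Phi w = W := by
  have hn : ‖W.2‖ ^ 2 = W.1 ^ 2 - 1 := by rw [qf_self] at hWW; linarith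
  have h1p : (0:ℝ) < 1 + W.1 := by linarith
  have hnn := norm_nonneg W.2
  refine ⟨(1 + W.1)⁻¹ • W.2, ?_, ?_⟩
  · rw [mem_ball_norm, norm_smul, Real.norm_eq_abs, abs_of_pos (inv_pos.mpr h1p)]
    rw [inv_mul_lt_iff₀ h1p, mul_one]
    nlinarith
  · have hw2 : ‖(1 + W.1)⁻¹ • W.2‖ ^ 2 = (W.1 - 1) / (W.1 + 1) := by
      rw [norm_smul, Real.norm_eq_abs, abs_of_pos (inv_pos.mpr h1p), mul_pow, hn]
      field_simp
      ring
    have hving : 1 - ‖(1 + W.1)⁻¹ • W.2‖ ^ 2 = 2 / (W.1 + 1) := by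
      rw [hw2]; field_simp; ring
    have hplus : 1 + ‖(1 + W.1)⁻¹ • W.2‖ ^ 2 = 2 * W.1 / (W.1 + 1) := by
      rw [hw2]; field_simp; ring
    apply Prod.ext
    · show (1 + ‖(1 + W.1)⁻¹ • W.2‖ ^ 2) / (1 - ‖(1 + W.1)⁻¹ • W.2‖ ^ 2) = W.1
      rw [hving, hplus]
      field_simp
    · show (2 / (1 - ‖(1 + W.1)⁻¹ • W.2‖ ^ 2)) • ((1 + W.1)⁻¹ • W.2) = W.2
      rw [hving, smul_smul]
      have : 2 / (2 / (W.1 + 1)) * (1 + W.1)⁻¹ = 1 := by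
        field_simp
        ring
      rw [this, one_smul]

lemma Phi_inj {x y : Pt n} (hx : x ∈ Ball n) (hy : y ∈ Ball n) (h : Phi x = Phi y) :
    x = y := by
  have hpx := P_pos hx
  have hpy := P_pos hy
  have h1 : (1 + ‖x‖ ^ 2) / (1 - ‖x‖ ^ 2) = (1 + ‖y‖ ^ 2) / (1 - ‖y‖ ^ 2) :=
    congrArg Prod.fst h
  have h2 : (2 / (1 - ‖x‖ ^ 2)) • x = (2 / (1 - ‖y‖ ^ 2)) • y := congrArg Prod.snd h
  have hnorm : ‖x‖ ^ 2 = ‖y‖ ^ 2 := by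
    field_simp at h1
    nlinarith
  rw [hnorm] at h2
  have hne : 2 / (1 - ‖y‖ ^ 2) ≠ 0 := by positivity
  exact smul_right_injective (Pt n) hne h2

lemma q_preserved {g : Equiv.Perm (Pt n)} (hmap : Set.MapsTo ⇑g (Ball n) (Ball n))
    (hiso : ∀ x ∈ Ball n, ∀ y ∈ Ball n, hDist (g x) (g y) = hDist x y)
    {x y : Pt n} (hx : x ∈ Ball n) (hy : y ∈ Ball n) :
    qf (Phi (g x)) (Phi (g y)) = qf (Phi x) (Phi y) := by
  have h := hiso x hx y hy
  rw [hDist_eq (hmap hx) (hmap hy), hDist_eq hx hy] at h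
  have h2 := congrArg Real.cosh h
  rwa [cosh_arcosh (one_le_qf_Phi (hmap hx) (hmap hy)),
    cosh_arcosh (one_le_qf_Phi hx hy)] at h2

/-- A bijection of the ambient space mapping the ball into itself and preserving the
hyperbolic metric maps the ball *onto* itself. -/
lemma isometry_surjOn {g : Equiv.Perm (Pt n)} (hmap : Set.MapsTo ⇑g (Ball n) (Ball n))
    (hiso : ∀ x ∈ Ball n, ∀ y ∈ Ball n, hDist (g x) (g y) = hDist x y) :
    ∀ z ∈ Ball n, ∃ w ∈ Ball n, g w = z := by
  classical
  intro z hz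
  have hq := fun {x y : Pt n} (hx : x ∈ Ball n) (hy : y ∈ Ball n) =>
    q_preserved hmap hiso hx hy
  -- reference points
  set x0 : Pt n := 0 with hx0def
  have hx0 : x0 ∈ Ball n := by rw [mem_ball_norm]; simp [hx0def]
  set xi : Fin (n + 1) → Pt n := fun i => (2:ℝ)⁻¹ • EuclideanSpace.single i (1:ℝ) with hxidef
  have hnxi : ∀ i, ‖xi i‖ = 2⁻¹ := by
    intro i
    rw [hxidef]
    simp [norm_smul, EuclideanSpace.norm_single]
  have hxi : ∀ i, xi i ∈ Ball n := by
    intro i; rw [mem_ball_norm, hnxi i]; norm_num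
  -- inner products between reference points
  have hinner : ∀ i j, ⟪xi i, xi j⟫ = if i = j then (4:ℝ)⁻¹ else 0 := by
    intro i j
    rw [hxidef]
    simp only [real_inner_smul_left, real_inner_smul_right]
    rw [EuclideanSpace.inner_single_left]
    simp only [EuclideanSpace.single_apply, map_one, one_mul]
    by_cases h : i = j
    · rw [if_pos h, if_pos h]; norm_num
    · rw [if_neg h, if_neg h]; ring
  -- q-values of reference points
  have vq00 : qf (Phi x0) (Phi x0) = 1 := qf_Phi_self hx0
  have vq0i : ∀ i, qf (Phi x0) (Phi (xi i)) = 5/3 := by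
    intro i
    rw [qf_Phi hx0 (hxi i), dist_eq_norm, hx0def, zero_sub, norm_neg, hnxi i]
    simp only [norm_zero]
    norm_num
  have vqij : ∀ i j, qf (Phi (xi i)) (Phi (xi j)) = if i = j then 1 else 25/9 := by
    intro i j
    rw [qf_Phi (hxi i) (hxi j), dist_eq_norm, norm_sub_sq_real, hnxi i, hnxi j, hinner i j]
    by_cases h : i = j
    · rw [if_pos h, if_pos h]; norm_num
    · rw [if_neg h, if_neg h]; norm_num
  -- images
  set Y0 : ℝ × Pt n := Phi (g x0) with hY0def
  set Yb : Fin (n + 1) → ℝ × Pt n := fun i => Phi (g (xi i)) with hYbdef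
  set Ep : Fin (n + 1) → ℝ × Pt n := fun i => (3/4 : ℝ) • Yb i - (5/4 : ℝ) • Y0 with hEpdef
  have wq00 : qf Y0 Y0 = 1 := by rw [hY0def, hq hx0 hx0]; exact vq00
  have wq0i : ∀ i, qf Y0 (Yb i) = 5/3 := by
    intro i; rw [hY0def, hYbdef, hq hx0 (hxi i)]; exact vq0i i
  have wqij : ∀ i j, qf (Yb i) (Yb j) = if i = j then 1 else 25/9 := by
    intro i j; rw [hYbdef, hq (hxi i) (hxi j)]; exact vqij i j
  have wqi0 : ∀ i, qf (Yb i) Y0 = 5/3 := by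
    intro i; rw [qf_symm]; exact wq0i i
  have hY0E : ∀ i, qf Y0 (Ep i) = 0 := by
    intro i
    simp only [hEpdef, qf_sub_right, qf_smul_right, wq00, wq0i i]
    norm_num
  have hEE : ∀ i j, qf (Ep i) (Ep j) = if i = j then (-1:ℝ) else 0 := by
    intro i j
    simp only [hEpdef, qf_sub_left, qf_sub_right, qf_smul_left, qf_smul_right,
      wq00, wqij i j, wqi0 i, wq0i j]
    by_cases h : i = j
    · rw [if_pos h, if_pos h]; norm_num
    · rw [if_neg h, if_neg h]; norm_num
  set A := Amap Y0 Ep with hAdef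
  have hA : ∀ U W, qf (A U) (A W) = qf U W := qf_Amap wq00 hY0E hEE
  have hAinj : Function.Injective A := Amap_injective hA
  have hAsurj : Function.Surjective A := LinearMap.injective_iff_surjective.mp hAinj
  -- A agrees with Phi ∘ g ∘ Phi⁻¹ on images of reference points
  have hPhix0 : Phi x0 = (1, (0 : Pt n)) := by rw [hx0def]; exact Phi_zero
  have hA0 : A (Phi x0) = Y0 := by
    rw [hPhix0, hAdef, Amap_apply]
    norm_num
  have hPhixi : ∀ i, Phi (xi i) = (5/3, (4/3 : ℝ) • EuclideanSpace.single i (1:ℝ)) := by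
    intro i
    have hn2 : ‖xi i‖ ^ 2 = (4:ℝ)⁻¹ := by rw [hnxi i]; norm_num
    unfold Phi
    rw [hn2]
    rw [show xi i = (2:ℝ)⁻¹ • EuclideanSpace.single i (1:ℝ) from rfl]
    rw [smul_smul, Prod.mk.injEq]
    constructor
    · norm_num
    · norm_num
  have hAi : ∀ i, A (Phi (xi i)) = Yb i := by
    intro i
    rw [hPhixi i, hAdef, Amap_apply]
    simp only
    have : ∀ j : Fin (n + 1), ((4/3 : ℝ) • EuclideanSpace.single i (1:ℝ)) j • Ep j
        = if j = i then (4/3 : ℝ) • Ep j else 0 := by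
      intro j
      rw [PiLp.smul_apply, EuclideanSpace.single_apply]
      by_cases h : j = i
      · simp [h]
      · simp [h]
    rw [Finset.sum_congr rfl fun j _ => this j, Finset.sum_ite_eq' Finset.univ i
      (fun j => (4/3 : ℝ) • Ep j)]
    simp only [Finset.mem_univ, if_true, hEpdef]
    module
  have key : ∀ x ∈ Ball n, Phi (g x) = A (Phi x) := by
    intro x hx
    obtain ⟨u, hu⟩ := hAsurj (Phi (g x) - A (Phi x))
    have p0 : qf (Phi (g x) - A (Phi x)) Y0 = 0 := by
      rw [qf_sub_left]
      rw [show qf (Phi (g x)) Y0 = qf (Phi x) (Phi x0) from hq hx hx0]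
      rw [show qf (A (Phi x)) Y0 = qf (Phi x) (Phi x0) from by rw [← hA0, hA]]
      ring
    have pi : ∀ i, qf (Phi (g x) - A (Phi x)) (Yb i) = 0 := by
      intro i
      rw [qf_sub_left]
      rw [show qf (Phi (g x)) (Yb i) = qf (Phi x) (Phi (xi i)) from hq hx (hxi i)]
      rw [show qf (A (Phi x)) (Yb i) = qf (Phi x) (Phi (xi i)) from by rw [← hAi i, hA]]
      ring
    have hu1 : u.1 = 0 := by
      have h := hA u (Phi x0)
      rw [hu, hA0, p0, hPhix0, qf_fst] at h
      exact h.symm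
    have hu2 : ∀ i, u.2 i = 0 := by
      intro i
      have h := hA u (Phi (xi i))
      rw [hu, hAi i, pi i, hPhixi i] at h
      simp only [qf, real_inner_smul_right, EuclideanSpace.inner_single_right, map_one,
        one_mul, hu1, starRingEnd_apply, star_trivial] at h
      have : (4/3 : ℝ) * u.2 i = 0 := by linarith
      linarith
    have hu0 : u = 0 := by
      apply Prod.ext hu1
      ext i
      simpa using hu2 i
    have : Phi (g x) - A (Phi x) = 0 := by rw [← hu, hu0, map_zero]
    exact sub_eq_zero.mp this
  -- solve for the preimage
  obtain ⟨W, hW⟩ := hAsurj (Phi z)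
  have hWq : qf W W = 1 := by
    rw [← hA W W, hW]
    exact qf_Phi_self hz
  have hW1 : (0:ℝ) < W.1 := by
    have e1 : qf W (Phi x0) = W.1 := by rw [hPhix0, qf_fst]
    have e2 : qf W (Phi x0) = qf (Phi z) Y0 := by rw [← hA W (Phi x0), hW, hA0]
    have e3 : (1:ℝ) ≤ qf (Phi z) Y0 := one_le_qf_fut (Fut_Phi hz) (Fut_Phi (hmap hx0))
    rw [← e1, e2]
    linarith
  obtain ⟨w, hwb, hPw⟩ := Phi_recon hWq hW1
  refine ⟨w, hwb, ?_⟩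
  apply Phi_inj (hmap hwb) hz
  rw [key w hwb, hPw, hW]


/-! ### Geodesics in the hyperboloid model -/

lemma qf_cosh_of_geo {f : ℝ → Pt n} {S : Set ℝ} (hb : ∀ t ∈ S, f t ∈ Ball n)
    (hg : ∀ s ∈ S, ∀ t ∈ S, hDist (f s) (f t) = |s - t|) {s t : ℝ} (hs : s ∈ S) (ht : t ∈ S) :
    qf (Phi (f s)) (Phi (f t)) = Real.cosh (s - t) := by
  have h := hg s hs t ht
  rw [hDist_eq (hb s hs) (hb t ht)] at h
  have h2 := congrArg Real.cosh h
  rw [cosh_arcosh (one_le_qf_Phi (hb s hs) (hb t ht))] at h2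
  rw [h2, Real.cosh_abs]

lemma normal_form {f : ℝ → Pt n} {S : Set ℝ} (h0 : (0:ℝ) ∈ S) (h1 : (1:ℝ) ∈ S)
    (hb : ∀ t ∈ S, f t ∈ Ball n)
    (hg : ∀ s ∈ S, ∀ t ∈ S, hDist (f s) (f t) = |s - t|) :
    ∃ U : ℝ × Pt n, qf U U = -1 ∧ qf U (Phi (f 0)) = 0 ∧
      ∀ t ∈ S, Phi (f t) = Real.cosh t • Phi (f 0) + Real.sinh t • U := by
  have hs1 : (0:ℝ) < Real.sinh 1 := by
    rw [Real.sinh_pos_iff]; norm_num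
  have hcs := Real.cosh_sq_sub_sinh_sq 1
  set Γ := Phi (f 0) with hΓdef
  set U := (Real.sinh 1)⁻¹ • (Phi (f 1) - Real.cosh 1 • Γ) with hUdef
  have q00 : qf Γ Γ = 1 := by
    have := qf_cosh_of_geo hb hg h0 h0; simpa using this
  have q10 : qf (Phi (f 1)) Γ = Real.cosh 1 := by
    have := qf_cosh_of_geo hb hg h1 h0; simpa using this
  have q01 : qf Γ (Phi (f 1)) = Real.cosh 1 := by rw [qf_symm]; exact q10
  have q11 : qf (Phi (f 1)) (Phi (f 1)) = 1 := by
    have := qf_cosh_of_geo hb hg h1 h1; simpa using this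
  have hUG : qf U Γ = 0 := by
    rw [hUdef, qf_smul_left, qf_sub_left, qf_smul_left, q10, q00]; ring
  have hUU : qf U U = -1 := by
    simp only [hUdef, qf_smul_left, qf_smul_right, qf_sub_left, qf_sub_right,
      q11, q10, q01, q00]
    field_simp
    nlinarith
  refine ⟨U, hUU, hUG, fun t ht => ?_⟩
  have qt0 : qf (Phi (f t)) Γ = Real.cosh t := by
    have := qf_cosh_of_geo hb hg ht h0; simpa using this
  have qtt : qf (Phi (f t)) (Phi (f t)) = 1 := by
    have := qf_cosh_of_geo hb hg ht ht; simpa using this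
  have qt1 : qf (Phi (f t)) (Phi (f 1)) = Real.cosh (t - 1) := qf_cosh_of_geo hb hg ht h1
  have qtU : qf (Phi (f t)) U = -Real.sinh t := by
    simp only [hUdef, qf_smul_right, qf_sub_right, qt1, qt0]
    rw [Real.cosh_sub]
    field_simp
    ring
  set W := Phi (f t) - Real.cosh t • Γ - Real.sinh t • U with hWdef
  have hWG : qf W Γ = 0 := by
    rw [hWdef, qf_sub_left, qf_sub_left, qf_smul_left, qf_smul_left, qt0, q00, hUG]; ring
  have hWU : qf W U = 0 := by
    rw [hWdef, qf_sub_left, qf_sub_left, qf_smul_left, qf_smul_left, qtU, hUU,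
      qf_symm Γ U, hUG]
    ring
  have q0t : qf Γ (Phi (f t)) = Real.cosh t := by rw [qf_symm]; exact qt0
  have qUt : qf U (Phi (f t)) = -Real.sinh t := by rw [qf_symm]; exact qtU
  have hGU : qf Γ U = 0 := by rw [qf_symm]; exact hUG
  have hWW : qf W W = 0 := by
    simp only [hWdef, qf_sub_left, qf_sub_right, qf_smul_left, qf_smul_right,
      qtt, qt0, q0t, qtU, qUt, q00, hUG, hGU, hUU]
    nlinarith [Real.cosh_sq_sub_sinh_sq t]
  have hW0 : W = 0 := ortho_eq_zero (Fut_Phi (hb 0 h0)) hWG (le_of_eq hWW.symm)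
  rw [hWdef, sub_sub, sub_eq_zero] at hW0
  exact hW0

lemma cosh_sub_one_le {σ : ℝ} (hσ : 0 ≤ σ) : Real.cosh σ - 1 ≤ σ * Real.sinh σ := by
  have hu := Real.add_one_le_exp σ
  have hv := Real.add_one_le_exp (-σ)
  have hp := Real.exp_pos σ
  have hq := Real.exp_pos (-σ)
  have hm : Real.exp σ * Real.exp (-σ) = 1 := by rw [← Real.exp_add]; simp
  have h1 : Real.exp σ * (1 - σ) ≤ 1 := by nlinarith
  rw [Real.cosh_eq, Real.sinh_eq]
  nlinarith [sq_nonneg (Real.exp σ - 1)]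

/-- The main lower bound: if the ray `r` starts at `γ 0` and is orthogonal to the
geodesic `γ` (in the sense that `γ 0` minimizes distances to points of the ray),
then `d(r t, γ s) ≥ t + |s| - log 4`. -/
lemma ray_axis_lower (γ : ℝ → Pt n) (hγball : ∀ t : ℝ, γ t ∈ Ball n)
    (hγgeo : ∀ s t : ℝ, hDist (γ s) (γ t) = |s - t|)
    (r : ℝ → Pt n) (hr0 : r 0 = γ 0)
    (hrball : ∀ t : ℝ, 0 ≤ t → r t ∈ Ball n)
    (hrgeo : ∀ s t : ℝ, 0 ≤ s → 0 ≤ t → hDist (r s) (r t) = |s - t|)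
    (horth : ∀ t : ℝ, 0 ≤ t → ∀ s : ℝ, hDist (r t) (γ 0) ≤ hDist (r t) (γ s)) :
    ∀ t : ℝ, 0 ≤ t → ∀ s : ℝ, t + |s| - Real.log 4 ≤ hDist (r t) (γ s) := by
  -- normal forms for the two geodesics
  obtain ⟨U, hUU, hUG, hU⟩ := normal_form (f := γ) (S := Set.univ) (mem_univ 0) (mem_univ 1)
    (fun t _ => hγball t) (fun s _ t _ => hγgeo s t)
  obtain ⟨V, hVV, hVG, hV⟩ := normal_form (f := r) (S := Set.Ici 0) (Set.mem_Ici.mpr (le_refl 0)) (Set.mem_Ici.mpr zero_le_one)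
    (fun t ht => hrball t ht) (fun s hs t ht => hrgeo s t hs ht)
  rw [hr0] at hVG hV
  have hΓ : Fut (Phi (γ 0)) := Fut_Phi (hγball 0)
  have hGU : qf (Phi (γ 0)) U = 0 := by rw [qf_symm]; exact hUG
  have hGV : qf (Phi (γ 0)) V = 0 := by rw [qf_symm]; exact hVG
  set c := qf V U with hcdef
  -- the product formula
  have hQ : ∀ t : ℝ, 0 ≤ t → ∀ s : ℝ, qf (Phi (r t)) (Phi (γ s))
      = Real.cosh t * Real.cosh s + Real.sinh t * Real.sinh s * c := by
    intro t ht s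
    rw [hV t ht, hU s (mem_univ s)]
    simp only [qf_add_left, qf_add_right, qf_smul_left, qf_smul_right,
      hΓ.1, hGU, hVG, hcdef]
    ring
  -- orthogonality forces c = 0
  have base : ∀ t : ℝ, 0 ≤ t → ∀ s : ℝ,
      Real.cosh t ≤ Real.cosh t * Real.cosh s + Real.sinh t * Real.sinh s * c := by
    intro t ht s
    have h1 : hDist (r t) (γ 0) = t := by
      rw [← hr0, hrgeo t 0 ht (le_refl 0)]
      rw [sub_zero, abs_of_nonneg ht]
    have h2 := horth t ht s
    rw [h1] at h2
    calc Real.cosh t ≤ Real.cosh (hDist (r t) (γ s)) := cosh_mono ht h2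
    _ = qf (Phi (r t)) (Phi (γ s)) := by
        rw [hDist_eq (hrball t ht) (hγball s),
          cosh_arcosh (one_le_qf_Phi (hrball t ht) (hγball s))]
    _ = _ := hQ t ht s
  have hs1 : (0:ℝ) < Real.sinh 1 := by rw [Real.sinh_pos_iff]; norm_num
  have hc1 : (0:ℝ) < Real.cosh 1 := Real.cosh_pos 1
  have hfin : ∀ σ : ℝ, 0 < σ → |c| * Real.sinh 1 ≤ Real.cosh 1 * σ := by
    intro σ hσ
    have hsσ : 0 < Real.sinh σ := by rw [Real.sinh_pos_iff]; exact hσ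
    have hp := base 1 zero_le_one σ
    have hm := base 1 zero_le_one (-σ)
    rw [Real.cosh_neg, Real.sinh_neg] at hm
    have habs : |Real.sinh 1 * Real.sinh σ * c| ≤ Real.cosh 1 * (Real.cosh σ - 1) := by
      rw [abs_le]
      constructor <;> nlinarith
    have h2 := cosh_sub_one_le (le_of_lt hσ)
    have h3 : |c| * Real.sinh 1 * Real.sinh σ ≤ Real.cosh 1 * σ * Real.sinh σ := by
      have e : |Real.sinh 1 * Real.sinh σ * c| = |c| * Real.sinh 1 * Real.sinh σ := by
        rw [abs_mul, abs_mul, abs_of_pos hs1, abs_of_pos hsσ]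
        ring
      rw [e] at habs
      nlinarith
    exact le_of_mul_le_mul_right h3 hsσ
  have hc0 : c = 0 := by
    by_contra hc
    have habs : 0 < |c| := abs_pos.mpr hc
    have h := hfin (|c| * Real.sinh 1 / (2 * Real.cosh 1)) (by positivity)
    have e : Real.cosh 1 * (|c| * Real.sinh 1 / (2 * Real.cosh 1)) = |c| * Real.sinh 1 / 2 := by
      field_simp
    rw [e] at h
    nlinarith [mul_pos habs hs1]
  -- conclude
  intro t ht s
  have hQ' := hQ t ht s
  rw [hc0, mul_zero, add_zero] at hQ'
  have hQ1 : 1 ≤ qf (Phi (r t)) (Phi (γ s)) := one_le_qf_Phi (hrball t ht) (hγball s)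
  set d := hDist (r t) (γ s) with hddef
  have hd : d = _root_.arcosh (qf (Phi (r t)) (Phi (γ s))) := hDist_eq (hrball t ht) (hγball s)
  have hdn : 0 ≤ d := by rw [hd]; exact arcosh_nonneg hQ1
  have hcd : Real.cosh d = Real.cosh t * Real.cosh s := by
    rw [hd, cosh_arcosh hQ1, hQ']
  have hexp : Real.cosh d ≤ Real.exp d := by
    have hsd : 0 ≤ Real.sinh d := by
      rw [Real.sinh_eq]
      have := Real.add_one_le_exp (-d)
      have h2 : Real.exp (-d) ≤ 1 := by
        rw [← Real.exp_zero]
        exact Real.exp_le_exp.mpr (by linarith)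
      have h3 : 1 ≤ Real.exp d := by
        rw [← Real.exp_zero]
        exact Real.exp_le_exp.mpr hdn
      linarith
    have : Real.cosh d + Real.sinh d = Real.exp d := by
      rw [Real.cosh_eq, Real.sinh_eq]; ring
    linarith
  have hct : Real.exp t / 2 ≤ Real.cosh t := by
    rw [Real.cosh_eq]
    have := Real.exp_pos (-t)
    linarith
  have hcsb : Real.exp |s| / 2 ≤ Real.cosh s := by
    rw [← Real.cosh_abs, Real.cosh_eq]
    have := Real.exp_pos (-|s|)
    linarith
  have hmul : Real.exp t / 2 * (Real.exp |s| / 2) ≤ Real.cosh t * Real.cosh s := by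
    have h1 := Real.exp_pos t
    have h2 := Real.exp_pos |s|
    nlinarith
  have hfin2 : Real.exp (t + |s| - Real.log 4) ≤ Real.exp d := by
    rw [Real.exp_sub, Real.exp_add, Real.exp_log (by norm_num : (0:ℝ) < 4)]
    calc Real.exp t * Real.exp |s| / 4 = Real.exp t / 2 * (Real.exp |s| / 2) := by ring
    _ ≤ Real.cosh t * Real.cosh s := hmul
    _ = Real.cosh d := hcd.symm
    _ ≤ Real.exp d := hexp
  exact Real.exp_le_exp.mp hfin2


/-! ### Isometry bookkeeping -/

/-- A bijection preserving the ball and the hyperbolic metric. -/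
def Nice (g : Equiv.Perm (Pt n)) : Prop :=
  Set.MapsTo ⇑g (Ball n) (Ball n) ∧ ∀ x ∈ Ball n, ∀ y ∈ Ball n, hDist (g x) (g y) = hDist x y

lemma Nice.inv {g : Equiv.Perm (Pt n)} (hg : Nice g) : Nice g⁻¹ := by
  have hsurj := isometry_surjOn hg.1 hg.2
  constructor
  · intro z hz
    obtain ⟨w, hw, hgw⟩ := hsurj z hz
    have e : (⇑g⁻¹) z = w := by rw [← hgw]; exact Equiv.symm_apply_apply g w
    show (⇑g⁻¹) z ∈ Ball n
    rw [e]; exact hw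
  · intro x hx y hy
    obtain ⟨w, hw, hgw⟩ := hsurj x hx
    obtain ⟨v, hv, hgv⟩ := hsurj y hy
    rw [← hgw, ← hgv, (by exact Equiv.symm_apply_apply g w : g⁻¹ (g w) = w),
      (by exact Equiv.symm_apply_apply g v : g⁻¹ (g v) = v)]
    exact (hg.2 w hw v hv).symm

lemma Nice.mul {g h : Equiv.Perm (Pt n)} (hg : Nice g) (hh : Nice h) : Nice (g * h) := by
  constructor
  · intro z hz
    have := hg.1 (hh.1 hz)
    simpa [Equiv.Perm.mul_apply] using this
  · intro x hx y hy
    rw [Equiv.Perm.mul_apply, Equiv.Perm.mul_apply, hg.2 _ (hh.1 hx) _ (hh.1 hy),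
      hh.2 x hx y hy]

lemma Nice.pow {g : Equiv.Perm (Pt n)} (hg : Nice g) (k : ℕ) : Nice (g ^ k) := by
  induction k with
  | zero =>
    refine ⟨fun z hz => ?_, fun x hx y hy => ?_⟩
    · simpa using hz
    · simp
  | succ m ih =>
    rw [pow_succ]
    exact Nice.mul ih hg

lemma conj_dist {g f : Equiv.Perm (Pt n)} (hg : Nice g) (hf : Nice f)
    {a b c : Pt n} (ha : a ∈ Ball n) (hb : b ∈ Ball n) (hc : c ∈ Ball n)
    (hfb : f b = c) :
    hDist ((g * f * g⁻¹) a) (g c) = hDist a (g b) := by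
  have hwb : (⇑g⁻¹) a ∈ Ball n := hg.inv.1 ha
  have hgw : g ((⇑g⁻¹) a) = a := Equiv.apply_symm_apply g a
  rw [Equiv.Perm.mul_apply, Equiv.Perm.mul_apply]
  calc hDist (g (f ((⇑g⁻¹) a))) (g c)
      = hDist (f ((⇑g⁻¹) a)) c := hg.2 _ (hf.1 hwb) _ hc
    _ = hDist (f ((⇑g⁻¹) a)) (f b) := by rw [hfb]
    _ = hDist ((⇑g⁻¹) a) b := hf.2 _ hwb _ hb
    _ = hDist (g ((⇑g⁻¹) a)) (g b) := (hg.2 _ hwb _ hb).symm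
    _ = hDist a (g b) := by rw [hgw]

/-! ### The core quantitative estimate -/

lemma core_est {x x' o gx gx' go : Pt n} {rr : ℝ → Pt n} {tp tm t0 kL eps : ℝ}
    (bx : x ∈ Ball n) (bx' : x' ∈ Ball n) (bo : o ∈ Ball n)
    (bgx : gx ∈ Ball n) (bgx' : gx' ∈ Ball n) (bgo : go ∈ Ball n)
    (brr : ∀ t : ℝ, 0 ≤ t → rr t ∈ Ball n)
    (hkL : 0 ≤ kL) (heps : 0 < eps)
    (dxo : hDist x o = kL) (dx'o : hDist x' o = kL)
    (dgxgo : hDist gx go = kL) (dgx'go : hDist gx' go = kL)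
    (dgxgx' : hDist gx gx' = 2 * kL)
    (dor : ∀ t : ℝ, 0 ≤ t → hDist o (rr t) = t)
    (drr : ∀ a b : ℝ, 0 ≤ a → 0 ≤ b → hDist (rr a) (rr b) = |a - b|)
    (lowx : ∀ t : ℝ, 0 ≤ t → t + kL - Real.log 4 ≤ hDist (rr t) x)
    (lowx' : ∀ t : ℝ, 0 ≤ t → t + kL - Real.log 4 ≤ hDist (rr t) x')
    (ht0 : 0 ≤ t0) (htp : 0 ≤ tp) (htm : 0 ≤ tm)
    (hd0 : hDist go (rr t0) ≤ eps) (hdp : hDist gx (rr tp) ≤ eps)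
    (hdm : hDist gx' (rr tm) ≤ eps) (hcase : tm ≤ tp) :
    |hDist x gx' - hDist o go| ≤ 6 * eps + Real.log 4 ∧
      |hDist x' go - hDist o gx| ≤ 6 * eps + Real.log 4 := by
  have hlog : (0:ℝ) ≤ Real.log 4 := Real.log_nonneg (by norm_num)
  -- parameter estimates
  have e1 : tp ≤ t0 + kL + 2 * eps := by
    have h1 : hDist (rr tp) (rr t0) ≤ eps + (kL + eps) := by
      calc hDist (rr tp) (rr t0)
          ≤ hDist (rr tp) gx + hDist gx (rr t0) :=
            hDist_triangle (brr tp htp) bgx (brr t0 ht0)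
        _ ≤ eps + (hDist gx go + hDist go (rr t0)) := by
            have := hDist_triangle bgx bgo (brr t0 ht0)
            have hs : hDist (rr tp) gx ≤ eps := by rw [hDist_symm]; exact hdp
            linarith
        _ ≤ eps + (kL + eps) := by rw [dgxgo]; linarith
    have h2 : tp - t0 ≤ |tp - t0| := le_abs_self _
    rw [← drr tp t0 htp ht0] at h2
    linarith
  have e2 : t0 ≤ tm + kL + 2 * eps := by
    have h1 : hDist (rr t0) (rr tm) ≤ eps + (kL + eps) := by
      calc hDist (rr t0) (rr tm)
          ≤ hDist (rr t0) go + hDist go (rr tm) :=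
            hDist_triangle (brr t0 ht0) bgo (brr tm htm)
        _ ≤ eps + (hDist go gx' + hDist gx' (rr tm)) := by
            have := hDist_triangle bgo bgx' (brr tm htm)
            have hs : hDist (rr t0) go ≤ eps := by rw [hDist_symm]; exact hd0
            linarith
        _ ≤ eps + (kL + eps) := by
            have hs : hDist go gx' = kL := by rw [hDist_symm]; exact dgx'go
            rw [hs]; linarith
    have h2 : t0 - tm ≤ |t0 - tm| := le_abs_self _
    rw [← drr t0 tm ht0 htm] at h2
    linarith
  have e3 : 2 * kL ≤ (tp - tm) + 2 * eps := by
    have h1 : hDist gx gx' ≤ eps + ((tp - tm) + eps) := by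
      calc hDist gx gx'
          ≤ hDist gx (rr tp) + hDist (rr tp) gx' :=
            hDist_triangle bgx (brr tp htp) bgx'
        _ ≤ eps + (hDist (rr tp) (rr tm) + hDist (rr tm) gx') := by
            have := hDist_triangle (brr tp htp) (brr tm htm) bgx'
            linarith
        _ ≤ eps + ((tp - tm) + eps) := by
            have hs : hDist (rr tm) gx' ≤ eps := by rw [hDist_symm]; exact hdm
            rw [drr tp tm htp htm, abs_of_nonneg (by linarith : (0:ℝ) ≤ tp - tm)]
            linarith
    rw [dgxgx'] at h1
    linarith
  have tmle : tm ≤ t0 - kL + 4 * eps := by linarith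
  have tpge : t0 + kL - 4 * eps ≤ tp := by linarith
  -- basic distances to the orbit point of o
  have dgo_up : hDist o go ≤ t0 + eps := by
    have := hDist_triangle bo (brr t0 ht0) bgo
    have hs : hDist (rr t0) go = hDist go (rr t0) := hDist_symm _ _
    rw [dor t0 ht0] at this
    linarith
  have dgo_low : t0 - eps ≤ hDist o go := by
    have := hDist_triangle bo bgo (brr t0 ht0)
    rw [dor t0 ht0] at this
    linarith
  constructor
  · -- first estimate
    have up1 : hDist x gx' ≤ kL + (tm + eps) := by
      have h1 := hDist_triangle bx bo bgx'
      have h2 := hDist_triangle bo (brr tm htm) bgx'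
      have hs : hDist (rr tm) gx' ≤ eps := by rw [hDist_symm]; exact hdm
      rw [dor tm htm] at h2
      rw [dxo] at h1
      linarith
    have low1 : tm + kL - Real.log 4 - eps ≤ hDist x gx' := by
      have h1 := lowx tm htm
      have h2 := hDist_triangle (brr tm htm) bgx' bx
      have hs : hDist gx' x = hDist x gx' := hDist_symm _ _
      have hs2 : hDist (rr tm) gx' ≤ eps := by rw [hDist_symm]; exact hdm
      linarith
    rw [abs_le]
    constructor
    · linarith
    · linarith
  · -- second estimate
    have up2 : hDist x' go ≤ kL + (t0 + eps) := by
      have h1 := hDist_triangle bx' bo bgo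
      rw [dx'o] at h1
      linarith
    have low2 : t0 + kL - Real.log 4 - eps ≤ hDist x' go := by
      have h1 := lowx' t0 ht0
      have h2 := hDist_triangle (brr t0 ht0) bgo bx'
      have hs : hDist go x' = hDist x' go := hDist_symm _ _
      have hs2 : hDist (rr t0) go ≤ eps := by rw [hDist_symm]; exact hd0
      linarith
    have dgx_up : hDist o gx ≤ tp + eps := by
      have h1 := hDist_triangle bo (brr tp htp) bgx
      have hs : hDist (rr tp) gx ≤ eps := by rw [hDist_symm]; exact hdp
      rw [dor tp htp] at h1
      linarith
    have dgx_low : tp - eps ≤ hDist o gx := by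
      have h1 := hDist_triangle bo bgx (brr tp htp)
      rw [dor tp htp] at h1
      linarith
    rw [abs_le]
    constructor
    · linarith
    · linarith

end ConjAux

open ConjAux in
/-- quantitative estimates for conjugates of powers of a hyperbolic
isometry `h` with axis `γ` (unit-speed geodesic, translation length `L`), where the
geodesic ray `r` from `o = γ 0` towards `ξ` is orthogonal to the axis (encoded as:
`o` is a nearest point of the axis to every point of the ray). There is a constant `C`
depending only on `ε` and the configuration (not on `k` or `g`) such that whenever the
segment `g(γ([-kL, kL]))` is `ε`-close to the ray, one of the two pairs of additive
comparability estimates holds, with `x_k = h^k(o)` and `x'_k = h^{-k}(o)`. -/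
theorem conjugate_power_estimates {n : ℕ} (h : Equiv.Perm (Pt n))
    (hh : IsHypIsometry h) (γ : ℝ → Pt n) (L : ℝ) (hL : 0 < L)
    (hγball : ∀ t : ℝ, γ t ∈ Ball n)
    (hγgeo : ∀ s t : ℝ, hDist (γ s) (γ t) = |s - t|)
    (haxis : ∀ t : ℝ, h (γ t) = γ (t + L))
    (ξ : Pt n) (hξ : ξ ∈ Sph n)
    (r : ℝ → Pt n) (hr0 : r 0 = γ 0)
    (hrball : ∀ t : ℝ, 0 ≤ t → r t ∈ Ball n)
    (hrgeo : ∀ s t : ℝ, 0 ≤ s → 0 ≤ t → hDist (r s) (r t) = |s - t|)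
    (hrlim : Filter.Tendsto r Filter.atTop (nhds ξ))
    (horth : ∀ t : ℝ, 0 ≤ t → ∀ s : ℝ, hDist (r t) (γ 0) ≤ hDist (r t) (γ s))
    (ε : ℝ) (hε : 0 < ε) :
    ∃ C : ℝ, ∀ k : ℕ, ∀ g : Equiv.Perm (Pt n), IsHypIsometry g →
      (∀ s ∈ Set.Icc (-(k * L)) ((k : ℝ) * L),
        ∃ t : ℝ, 0 ≤ t ∧ hDist (g (γ s)) (r t) ≤ ε) →
      ((|hDist ((g * h ^ k * g⁻¹) ((h ^ k) (γ 0))) (g (γ 0))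
            - hDist (γ 0) (g (γ 0))| ≤ C ∧
        |hDist ((g * h ^ k * g⁻¹) ((h⁻¹ ^ k) (γ 0))) (g ((h ^ k) (γ 0)))
            - hDist (γ 0) (g ((h ^ k) (γ 0)))| ≤ C) ∨
       (|hDist ((g * h⁻¹ ^ k * g⁻¹) ((h⁻¹ ^ k) (γ 0))) (g (γ 0))
            - hDist (γ 0) (g (γ 0))| ≤ C ∧
        |hDist ((g * h⁻¹ ^ k * g⁻¹) ((h ^ k) (γ 0))) (g ((h⁻¹ ^ k) (γ 0)))
            - hDist (γ 0) (g ((h⁻¹ ^ k) (γ 0)))| ≤ C)) := by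
  classical
  -- axis navigation
  have hNh : Nice h := ⟨hh.1, hh.2.2⟩
  have hk_apply : ∀ k : ℕ, ∀ t : ℝ, (h ^ k) (γ t) = γ (t + k * L) := by
    intro k
    induction k with
    | zero => intro t; simp
    | succ m ih =>
      intro t
      rw [pow_succ, Equiv.Perm.mul_apply, haxis t, ih (t + L)]
      congr 1
      push_cast
      ring
  have hinv_apply : ∀ t : ℝ, h⁻¹ (γ t) = γ (t - L) := by
    intro t
    have e : h (γ (t - L)) = γ t := by
      rw [haxis (t - L)]
      exact congrArg γ (by ring)
    rw [← e, (by exact Equiv.symm_apply_apply h (γ (t - L)) : h⁻¹ (h (γ (t - L))) = γ (t - L))]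
  have hki_apply : ∀ k : ℕ, ∀ t : ℝ, (h⁻¹ ^ k) (γ t) = γ (t - k * L) := by
    intro k
    induction k with
    | zero => intro t; simp
    | succ m ih =>
      intro t
      rw [pow_succ, Equiv.Perm.mul_apply, hinv_apply t, ih (t - L)]
      congr 1
      push_cast
      ring
  have R4 := ray_axis_lower γ hγball hγgeo r hr0 hrball hrgeo horth
  refine ⟨6 * ε + Real.log 4, ?_⟩
  intro k g hg hclose
  have hNg : Nice g := ⟨hg.1, hg.2.2⟩
  have hNhk : Nice (h ^ k) := hNh.pow k
  have hNhik : Nice (h⁻¹ ^ k) := hNh.inv.pow k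
  set kL : ℝ := (k : ℝ) * L with hkLdef
  have hkL : 0 ≤ kL := mul_nonneg (Nat.cast_nonneg k) hL.le
  have hxk : (h ^ k) (γ 0) = γ kL := by rw [hk_apply k 0, zero_add]
  have hx'k : (h⁻¹ ^ k) (γ 0) = γ (-kL) := by
    rw [hki_apply k 0]
    exact congrArg γ (by ring)
  -- isometric rewriting of the four distances
  have dA : hDist ((g * h ^ k * g⁻¹) ((h ^ k) (γ 0))) (g (γ 0))
      = hDist (γ kL) (g (γ (-kL))) := by
    rw [hxk]
    exact conj_dist hNg hNhk (hγball kL) (hγball (-kL)) (hγball 0)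
      (by rw [hk_apply k (-kL)]; exact congrArg γ (by ring))
  have dB : hDist ((g * h ^ k * g⁻¹) ((h⁻¹ ^ k) (γ 0))) (g ((h ^ k) (γ 0)))
      = hDist (γ (-kL)) (g (γ 0)) := by
    rw [hxk, hx'k]
    exact conj_dist hNg hNhk (hγball (-kL)) (hγball 0) (hγball kL) hxk
  have dA' : hDist ((g * h⁻¹ ^ k * g⁻¹) ((h⁻¹ ^ k) (γ 0))) (g (γ 0))
      = hDist (γ (-kL)) (g (γ kL)) := by
    rw [hx'k]
    exact conj_dist hNg hNhik (hγball (-kL)) (hγball kL) (hγball 0)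
      (by rw [hki_apply k kL]; exact congrArg γ (by ring))
  have dB' : hDist ((g * h⁻¹ ^ k * g⁻¹) ((h ^ k) (γ 0))) (g ((h⁻¹ ^ k) (γ 0)))
      = hDist (γ kL) (g (γ 0)) := by
    rw [hxk, hx'k]
    exact conj_dist hNg hNhik (hγball kL) (hγball 0) (hγball (-kL)) hx'k
  rw [dA, dB, dA', dB', hxk, hx'k]
  -- extract the three approximation times
  obtain ⟨t0, ht0, hd0⟩ := hclose 0 (Set.mem_Icc.mpr ⟨by linarith, by linarith⟩)
  obtain ⟨tp, htp, hdp⟩ := hclose kL (Set.mem_Icc.mpr ⟨by linarith, le_refl _⟩)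
  obtain ⟨tm, htm, hdm⟩ := hclose (-kL) (Set.mem_Icc.mpr ⟨le_refl _, by linarith⟩)
  -- basic distances
  have bo := hγball 0
  have bx := hγball kL
  have bx' := hγball (-kL)
  have dxo : hDist (γ kL) (γ 0) = kL := by
    rw [hγgeo, sub_zero, abs_of_nonneg hkL]
  have dx'o : hDist (γ (-kL)) (γ 0) = kL := by
    rw [hγgeo]
    rw [show -kL - 0 = -kL from by ring, abs_neg, abs_of_nonneg hkL]
  have dxx' : hDist (γ kL) (γ (-kL)) = 2 * kL := by
    rw [hγgeo]
    rw [show kL - -kL = 2 * kL from by ring, abs_of_nonneg (by linarith)]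
  have dor : ∀ t : ℝ, 0 ≤ t → hDist (γ 0) (r t) = t := by
    intro t ht
    rw [← hr0, hrgeo 0 t (le_refl 0) ht, zero_sub, abs_neg, abs_of_nonneg ht]
  have lowx : ∀ t : ℝ, 0 ≤ t → t + kL - Real.log 4 ≤ hDist (r t) (γ kL) := by
    intro t ht
    have := R4 t ht kL
    rwa [abs_of_nonneg hkL] at this
  have lowx' : ∀ t : ℝ, 0 ≤ t → t + kL - Real.log 4 ≤ hDist (r t) (γ (-kL)) := by
    intro t ht
    have := R4 t ht (-kL)
    rwa [abs_neg, abs_of_nonneg hkL] at this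
  -- distances between g-images
  have dgxgo : hDist (g (γ kL)) (g (γ 0)) = kL := by rw [hNg.2 _ bx _ bo]; exact dxo
  have dgx'go : hDist (g (γ (-kL))) (g (γ 0)) = kL := by rw [hNg.2 _ bx' _ bo]; exact dx'o
  have dgxgx' : hDist (g (γ kL)) (g (γ (-kL))) = 2 * kL := by
    rw [hNg.2 _ bx _ bx']; exact dxx'
  have bgo := hNg.1 bo
  have bgx := hNg.1 bx
  have bgx' := hNg.1 bx'
  rcases le_total tm tp with hcase | hcase
  · left
    exact core_est bx bx' bo bgx bgx' bgo hrball hkL hε dxo dx'o dgxgo dgx'go dgxgx'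
      dor hrgeo lowx lowx' ht0 htp htm hd0 hdp hdm hcase
  · right
    have dgx'gx : hDist (g (γ (-kL))) (g (γ kL)) = 2 * kL := by
      rw [hDist_symm]; exact dgxgx'
    exact core_est bx' bx bo bgx' bgx bgo hrball hkL hε dx'o dxo dgx'go dgxgo dgx'gx
      dor hrgeo lowx' lowx ht0 htm htp hd0 hdm hdp hcase
end
end
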